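/- arXiv:math/9912217 — 10 statements merged into one kernel-verified Lean document; each statement's English description precedes it below -/
import Mathlib

section
/- Let E and F be real topological vector spaces whose topologies are induced by families of seminorms 𝒫 (on E) and 𝒬 (on F). Let Q : E → F be a continuous map satisfying Q(λx) = λQ(x) for all λ ∈ ℝ and x ∈ E. Let (x_ε)_{ε∈(0,1]} be a family in E such that for every p ∈ 𝒫 and every q ∈ ℕ one has p(x_ε) = O(ε^q) as ε → 0⁺. Then for every r ∈ 𝒬 and every q ∈ ℕ one has r(Q(x_ε)) = O(ε^q) as ε → 0⁺. -/
open Topology Filter Asymptotics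

/-!
A continuous map `f : E → ℝ` with `f (l • y) = |l| * f y` is dominated by finitely many of the
seminorms generating the topology of `E`: continuity at `0` puts a ball of `s.sup p` inside
`{f < 1}`, and rescaling turns this into `f ≤ C * s.sup p`. Applied to `f = q j ∘ Q`, negligibility
of `x` passes to `Q ∘ x`, since `s.sup p ≤ ∑ i ∈ s, p i` is negligible.
-/

theorem Seminorm.le_div_of_ball_subset {E : Type*} [AddCommGroup E] [Module ℝ E]
    (p : Seminorm ℝ E) {f : E → ℝ} (hf : ∀ (l : ℝ) (y : E), f (l • y) = |l| * f y)
    {δ : ℝ} (hδ : 0 < δ) (hball : p.ball 0 δ ⊆ {y | f y < 1}) (y : E) :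
    f y ≤ p y / δ := by
  refine le_of_forall_gt fun t ht => ?_
  have ht0 : 0 < t := (div_nonneg (apply_nonneg p y) hδ.le).trans_lt ht
  have hlt : f (t⁻¹ • y) < 1 := hball <| by
    rw [Seminorm.mem_ball_zero, map_smul_eq_mul, Real.norm_eq_abs, abs_inv, abs_of_pos ht0,
      inv_mul_lt_iff₀ ht0]
    rwa [div_lt_iff₀ hδ] at ht
  rwa [hf, abs_inv, abs_of_pos ht0, inv_mul_lt_iff₀ ht0, mul_one] at hlt

theorem WithSeminorms.exists_le_finset_sup_of_continuousAt {E ι : Type*} [AddCommGroup E]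
    [Module ℝ E] [TopologicalSpace E] {p : SeminormFamily ℝ E ι} (hp : WithSeminorms p)
    {f : E → ℝ} (hf : ∀ (l : ℝ) (y : E), f (l • y) = |l| * f y) (hcont : ContinuousAt f 0) :
    ∃ (s : Finset ι) (C : ℝ), ∀ y, f y ≤ C * s.sup p y := by
  have hf0 : f 0 = 0 := by simpa using hf 0 0
  have hnhds : {y | f y < 1} ∈ 𝓝 (0 : E) :=
    hcont.preimage_mem_nhds (Iio_mem_nhds (hf0 ▸ one_pos))
  obtain ⟨⟨s, δ⟩, hδ, hball⟩ := hp.hasBasis_zero_ball.mem_iff.mp hnhds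
  refine ⟨s, δ⁻¹, fun y => ?_⟩
  rw [inv_mul_eq_div]
  exact (s.sup p).le_div_of_ball_subset hf hδ hball y

theorem Asymptotics.IsBigO.finset_sup_seminorm {α E ι : Type*} [AddCommGroup E] [Module ℝ E]
    {l : Filter α} {p : ι → Seminorm ℝ E} {x : α → E} {g : α → ℝ} (s : Finset ι)
    (h : ∀ i ∈ s, (fun a => p i (x a)) =O[l] g) :
    (fun a => s.sup p (x a)) =O[l] g := by
  refine IsBigO.trans (IsBigO.of_bound 1 (Eventually.of_forall fun a => ?_)) (IsBigO.fun_sum h)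
  rw [one_mul, Real.norm_of_nonneg (apply_nonneg _ _),
    Real.norm_of_nonneg (Finset.sum_nonneg fun i _ => apply_nonneg _ _)]
  exact (Seminorm.finset_sup_le_sum p s (x a)).trans_eq (sum_apply s p (x a))

theorem continuous_homogeneous_preserves_negligible_general
    {E F : Type*}
    [AddCommGroup E] [Module ℝ E] [TopologicalSpace E]
    [AddCommGroup F] [Module ℝ F] [TopologicalSpace F]
    {ι κ : Type*} (p : SeminormFamily ℝ E ι) (q : SeminormFamily ℝ F κ)
    (hp : WithSeminorms p) (hq : WithSeminorms q)
    (Q : E → F) (hQc : Continuous Q)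
    (hQh : ∀ (l : ℝ) (x : E), Q (l • x) = l • Q x)
    (x : ℝ → E)
    (hx : ∀ i : ι, ∀ m : ℕ,
      (fun ε => p i (x ε)) =O[𝓝[>] (0:ℝ)] fun ε => ε ^ m) :
    ∀ j : κ, ∀ m : ℕ,
      (fun ε => q j (Q (x ε))) =O[𝓝[>] (0:ℝ)] fun ε => ε ^ m := by
  intro j m
  have hhom : ∀ (l : ℝ) (y : E), q j (Q (l • y)) = |l| * q j (Q y) := fun l y => by
    rw [hQh, map_smul_eq_mul, Real.norm_eq_abs]
  obtain ⟨s, C, hC⟩ := hp.exists_le_finset_sup_of_continuousAt hhom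
    ((hq.continuous_seminorm j).comp hQc).continuousAt
  have hdom : (fun ε => q j (Q (x ε))) =O[𝓝[>] (0:ℝ)] fun ε => s.sup p (x ε) :=
    IsBigO.of_bound C <| Eventually.of_forall fun ε => by
      rw [Real.norm_of_nonneg (apply_nonneg _ _), Real.norm_of_nonneg (apply_nonneg _ _)]
      exact hC (x ε)
  exact hdom.trans (IsBigO.finset_sup_seminorm s fun i _ => hx i m)

/-- **Continuous homogeneous maps preserve negligibility.**  Let `E`, `F` be topological
vector spaces whose topologies are induced by families of seminorms `p` resp. `q`, and let
`Q : E → F` be continuous and homogeneous.  If `(x ε)` is a negligible family in `E`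
(every seminorm of the family decays faster than any power of `ε` as `ε → 0⁺`), then
`(Q (x ε))` is a negligible family in `F`. -/
theorem continuous_homogeneous_preserves_negligible
    {E F : Type*}
    [AddCommGroup E] [Module ℝ E] [TopologicalSpace E]
    [AddCommGroup F] [Module ℝ F] [TopologicalSpace F]
    {ι κ : Type*} [Nonempty ι] [Nonempty κ] (p : SeminormFamily ℝ E ι) (q : SeminormFamily ℝ F κ)
    (hp : WithSeminorms p) (hq : WithSeminorms q)
    (Q : E → F) (hQc : Continuous Q)
    (hQh : ∀ (l : ℝ) (x : E), Q (l • x) = l • Q x)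
    (x : ℝ → E)
    (hx : ∀ i : ι, ∀ m : ℕ,
      (fun ε => p i (x ε)) =O[𝓝[>] (0:ℝ)] fun ε => ε ^ m) :
    ∀ j : κ, ∀ m : ℕ,
      (fun ε => q j (Q (x ε))) =O[𝓝[>] (0:ℝ)] fun ε => ε ^ m :=
  continuous_homogeneous_preserves_negligible_general p q hp hq Q hQc hQh x hx
end

section
/- Let Ω, Ω′ ⊆ ℝⁿ be open and let μ : Ω′ → Ω be a C^∞ diffeomorphism (a smooth bijection with smooth inverse). If (n_ε)_{ε∈(0,1]} is a negligible family of smooth functions on Ω, then (n_ε ∘ μ)_{ε∈(0,1]} is a negligible family on Ω′. -/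
open Topology Filter Set

/-- A family `(u ε)` of smooth functions on an open set `Ω ⊆ ℝⁿ` is *negligible* if for every
compact `K ⊆ Ω`, every derivative order `k` and every `q ∈ ℕ`,
`sup_{x ∈ K} ‖∂^k u_ε(x)‖ = O(ε^{q})` as `ε → 0⁺`. -/
def IsNegligibleFamily (n : ℕ) (Ω : Set (EuclideanSpace ℝ (Fin n)))
    (u : ℝ → EuclideanSpace ℝ (Fin n) → ℝ) : Prop :=
  ∀ K : Set (EuclideanSpace ℝ (Fin n)), K ⊆ Ω → IsCompact K → ∀ k q : ℕ,
    ∃ C : ℝ, ∀ᶠ ε in 𝓝[>] (0:ℝ), ∀ x ∈ K,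
      ‖iteratedFDerivWithin ℝ k (u ε) Ω x‖ ≤ C * ε ^ q

/-- **Negligibility is invariant under smooth diffeomorphisms:** if `μ : Ω′ → Ω` is a
`C^∞`-diffeomorphism between open subsets of `ℝⁿ` and `(v ε)` is a negligible family of
smooth functions on `Ω`, then `(v ε ∘ μ)` is a negligible family on `Ω′`. -/
theorem isNegligibleFamily_comp_diffeomorph {n : ℕ}
    (Ω Ω' : Set (EuclideanSpace ℝ (Fin n))) (hΩ : IsOpen Ω) (hΩ' : IsOpen Ω')
    (μ ν : EuclideanSpace ℝ (Fin n) → EuclideanSpace ℝ (Fin n))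
    (hμbij : Set.BijOn μ Ω' Ω)
    (hμ : ContDiffOn ℝ (⊤ : ℕ∞) μ Ω') (hν : ContDiffOn ℝ (⊤ : ℕ∞) ν Ω)
    (hνμ : ∀ x ∈ Ω', ν (μ x) = x) (hμν : ∀ y ∈ Ω, μ (ν y) = y)
    (v : ℝ → EuclideanSpace ℝ (Fin n) → ℝ)
    (hv_smooth : ∀ ε ∈ Ioc (0:ℝ) 1, ContDiffOn ℝ (⊤ : ℕ∞) (v ε) Ω)
    (hv : IsNegligibleFamily n Ω v) :
    IsNegligibleFamily n Ω' (fun ε x => v ε (μ x)) := by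
  intro K hKΩ' hK k q
  have hud : UniqueDiffOn ℝ Ω := hΩ.uniqueDiffOn
  have hud' : UniqueDiffOn ℝ Ω' := hΩ'.uniqueDiffOn
  -- the image of K is a compact subset of Ω
  have hK' : IsCompact (μ '' K) := hK.image_of_continuousOn (hμ.continuousOn.mono hKΩ')
  have hK'Ω : μ '' K ⊆ Ω := by
    rintro y ⟨x, hx, rfl⟩
    exact hμbij.mapsTo (hKΩ' hx)
  -- bounds on the derivatives of μ on K
  have hDbound : ∀ i : ℕ, ∃ Di : ℝ, ∀ x ∈ K, ‖iteratedFDerivWithin ℝ i μ Ω' x‖ ≤ Di := by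
    intro i
    obtain ⟨Di, hDi⟩ := hK.exists_bound_of_continuousOn
      ((hμ.continuousOn_iteratedFDerivWithin (by exact_mod_cast le_top) hud').mono hKΩ')
    exact ⟨Di, hDi⟩
  choose Dfun hDfun using hDbound
  set D : ℝ := 1 + ∑ i ∈ Finset.range (k + 1), max (Dfun i) 0 with hDdef
  have hsumnn : (0:ℝ) ≤ ∑ i ∈ Finset.range (k + 1), max (Dfun i) 0 :=
    Finset.sum_nonneg fun i _ => le_max_right _ _
  have hD1 : (1:ℝ) ≤ D := le_add_of_nonneg_right hsumnn
  have hDle : ∀ i, i ≤ k → Dfun i ≤ D := by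
    intro i hi
    have h1 : max (Dfun i) 0 ≤ ∑ j ∈ Finset.range (k + 1), max (Dfun j) 0 :=
      Finset.single_le_sum (f := fun j => max (Dfun j) 0)
        (fun j _ => le_max_right _ _) (Finset.mem_range.2 (by omega))
    have := le_max_left (Dfun i) 0
    linarith
  -- constants for the derivatives of v on μ '' K
  choose Cfun hCfun using fun i : ℕ => hv (μ '' K) hK'Ω hK' i q
  set Cm : ℝ := ∑ i ∈ Finset.range (k + 1), max (Cfun i) 0 with hCmdef
  have hCmnn : (0:ℝ) ≤ Cm := Finset.sum_nonneg fun i _ => le_max_right _ _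
  have hCle : ∀ i, i ≤ k → Cfun i ≤ Cm := by
    intro i hi
    have h1 : max (Cfun i) 0 ≤ Cm :=
      Finset.single_le_sum (f := fun j => max (Cfun j) 0)
        (fun j _ => le_max_right _ _) (Finset.mem_range.2 (by omega))
    have := le_max_left (Cfun i) 0
    linarith
  refine ⟨(Nat.factorial k : ℝ) * Cm * D ^ k, ?_⟩
  have hev : ∀ᶠ ε in 𝓝[>] (0:ℝ), ∀ i ∈ Finset.range (k + 1), ∀ y ∈ μ '' K,
      ‖iteratedFDerivWithin ℝ i (v ε) Ω y‖ ≤ Cfun i * ε ^ q :=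
    (Filter.eventually_all_finset _).2 fun i _ => hCfun i
  filter_upwards [hev, Ioc_mem_nhdsGT_of_mem ⟨le_refl (0:ℝ), one_pos⟩] with ε hevε hε x hx
  have hεq : (0:ℝ) ≤ ε ^ q := pow_nonneg hε.1.le q
  have hC : ∀ i, i ≤ k → ‖iteratedFDerivWithin ℝ i (v ε) Ω (μ x)‖ ≤ Cm * ε ^ q := by
    intro i hi
    have := hevε i (Finset.mem_range.2 (by omega)) (μ x) ⟨x, hx, rfl⟩
    exact this.trans (mul_le_mul_of_nonneg_right (hCle i hi) hεq)
  have hD : ∀ i, 1 ≤ i → i ≤ k → ‖iteratedFDerivWithin ℝ i μ Ω' x‖ ≤ D ^ i := by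
    intro i h1 h2
    exact (hDfun i x hx).trans ((hDle i h2).trans (le_self_pow₀ hD1 (by omega)))
  have hmain := norm_iteratedFDerivWithin_comp_le (𝕜 := ℝ) (g := v ε) (f := μ) (n := k)
    (hv_smooth ε hε) hμ (by exact_mod_cast le_top) hud hud' hμbij.mapsTo (hKΩ' hx) hC hD
  calc ‖iteratedFDerivWithin ℝ k (fun y => v ε (μ y)) Ω' x‖
      = ‖iteratedFDerivWithin ℝ k ((v ε) ∘ μ) Ω' x‖ := rfl
    _ ≤ (Nat.factorial k : ℝ) * (Cm * ε ^ q) * D ^ k := hmain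
    _ = (Nat.factorial k : ℝ) * Cm * D ^ k * ε ^ q := by ring
end

section
/- Let f ∈ C^∞(ℝ) be slowly increasing and let Ω ⊆ ℝⁿ be open. If (u_ε)_{ε∈(0,1]} is a moderate family of smooth functions on Ω, then (f ∘ u_ε)_{ε∈(0,1]} is moderate on Ω; if moreover (n_ε)_{ε∈(0,1]} is a negligible family on Ω, then (f ∘ (u_ε + n_ε) − f ∘ u_ε)_{ε∈(0,1]} is negligible on Ω. -/
open Topology Filter Set

/-- A family `(u ε)` of smooth functions on an open set `Ω ⊆ ℝⁿ` is *moderate* if for every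
compact `K ⊆ Ω` and every derivative order `k` there is `p ∈ ℕ` such that
`sup_{x ∈ K} ‖∂^k u_ε(x)‖ = O(ε^{-p})` as `ε → 0⁺`. -/
def IsModerateFamily (n : ℕ) (Ω : Set (EuclideanSpace ℝ (Fin n)))
    (u : ℝ → EuclideanSpace ℝ (Fin n) → ℝ) : Prop :=
  ∀ K : Set (EuclideanSpace ℝ (Fin n)), K ⊆ Ω → IsCompact K → ∀ k : ℕ,
    ∃ p : ℕ, ∃ C : ℝ, ∀ᶠ ε in 𝓝[>] (0:ℝ), ∀ x ∈ K,
      ‖iteratedFDerivWithin ℝ k (u ε) Ω x‖ ≤ C * (ε ^ p)⁻¹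

variable {𝕜 : Type*} [NontriviallyNormedField 𝕜] {E F G : Type*}
  [NormedAddCommGroup E] [NormedSpace 𝕜 E] [NormedAddCommGroup F] [NormedSpace 𝕜 F]
  [NormedAddCommGroup G] [NormedSpace 𝕜 G]

lemma norm_compAlong_le {k : ℕ} (c : OrderedFinpartition k)
    (f : ContinuousMultilinearMap 𝕜 (fun _ : Fin c.length ↦ F) G)
    (p : ∀ i : Fin c.length, ContinuousMultilinearMap 𝕜 (fun _ : Fin (c.partSize i) ↦ E) F) :
    ‖c.compAlongOrderedFinpartition f p‖ ≤ ‖f‖ * ∏ m, ‖p m‖ := by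
  apply ContinuousMultilinearMap.opNorm_le_bound (by positivity) (fun v ↦ ?_)
  simp only [OrderedFinpartition.compAlongOrderFinpartition_apply]
  apply (f.le_opNorm _).trans
  rw [mul_assoc, ← c.prod_sigma_eq_prod, ← Finset.prod_mul_distrib]
  gcongr with m _
  exact (p m).le_opNorm _

lemma norm_compAlongL_le {k : ℕ} (c : OrderedFinpartition k)
    (f : ContinuousMultilinearMap 𝕜 (fun _ : Fin c.length ↦ F) G) :
    ‖c.compAlongOrderedFinpartitionL 𝕜 E F G f‖ ≤ ‖f‖ := by
  apply ContinuousMultilinearMap.opNorm_le_bound (norm_nonneg f) (fun p ↦ ?_)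
  simpa using norm_compAlong_le c f p

lemma fdb_formula {n : ℕ} {Ω : Set (EuclideanSpace ℝ (Fin n))} (hΩu : UniqueDiffOn ℝ Ω)
    {f : ℝ → ℝ} (hf : ContDiff ℝ (⊤ : ℕ∞) f) {w : EuclideanSpace ℝ (Fin n) → ℝ}
    (hw : ContDiffOn ℝ (⊤ : ℕ∞) w Ω) {x} (hx : x ∈ Ω) (k : ℕ) :
    iteratedFDerivWithin ℝ k (fun y => f (w y)) Ω x =
      ∑ c : OrderedFinpartition k,
        (ftaylorSeries ℝ f (w x)).compAlongOrderedFinpartition (ftaylorSeriesWithin ℝ w Ω x) c := by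
  have hq := (contDiff_iff_ftaylorSeries.mp hf).hasFTaylorSeriesUpToOn univ
  have hp := hw.ftaylorSeriesWithin hΩu
  have H := hq.comp hp (mapsTo_univ _ _)
  have h := (H.eq_iteratedFDerivWithin_of_uniqueDiffOn (m := k)
    (by exact_mod_cast le_top) hΩu hx).symm
  exact h.symm ▸ rfl

lemma iter_sub {n : ℕ} {Ω : Set (EuclideanSpace ℝ (Fin n))} (hΩu : UniqueDiffOn ℝ Ω)
    {f g : EuclideanSpace ℝ (Fin n) → ℝ} {i : ℕ}
    (hf : ContDiffOn ℝ i f Ω) (hg : ContDiffOn ℝ i g Ω) {x} (hx : x ∈ Ω) :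
    iteratedFDerivWithin ℝ i (fun y => f y - g y) Ω x =
      iteratedFDerivWithin ℝ i f Ω x - iteratedFDerivWithin ℝ i g Ω x := by
  have hgneg : ContDiffOn ℝ i (-g) Ω := hg.neg
  have h1 : (fun y => f y - g y) = (fun y => f y + (-g) y) := by
    funext y; simp [sub_eq_add_neg]
  rw [h1, iteratedFDerivWithin_add_apply' (hf x hx) (hgneg x hx) hΩu hx,
    iteratedFDerivWithin_neg_apply hΩu hx, sub_eq_add_neg]

set_option maxHeartbeats 2000000 in
lemma part2 {n : ℕ}
    (f : ℝ → ℝ) (hf : ContDiff ℝ (⊤ : ℕ∞) f)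
    (hslowU : ∀ k : ℕ, ∃ C : ℝ, 1 ≤ C ∧ ∃ p : ℕ, ∀ i ≤ k, ∀ y : ℝ,
      |iteratedDeriv i f y| ≤ C * (1 + |y|) ^ p)
    (Ω : Set (EuclideanSpace ℝ (Fin n))) (hΩ : IsOpen Ω)
    (u v : ℝ → EuclideanSpace ℝ (Fin n) → ℝ)
    (hu_smooth : ∀ ε ∈ Ioc (0:ℝ) 1, ContDiffOn ℝ (⊤ : ℕ∞) (u ε) Ω)
    (hv_smooth : ∀ ε ∈ Ioc (0:ℝ) 1, ContDiffOn ℝ (⊤ : ℕ∞) (v ε) Ω)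
    (huU : ∀ K : Set (EuclideanSpace ℝ (Fin n)), K ⊆ Ω → IsCompact K → ∀ k : ℕ,
      ∃ p : ℕ, ∃ C : ℝ, 1 ≤ C ∧ ∀ᶠ ε in 𝓝[>] (0:ℝ), ∀ i ≤ k, ∀ x ∈ K,
        ‖iteratedFDerivWithin ℝ i (u ε) Ω x‖ ≤ C * (ε ^ p)⁻¹)
    (hvU : ∀ K : Set (EuclideanSpace ℝ (Fin n)), K ⊆ Ω → IsCompact K → ∀ k q : ℕ,
      ∃ C : ℝ, 0 ≤ C ∧ ∀ᶠ ε in 𝓝[>] (0:ℝ), ∀ i ≤ k, ∀ x ∈ K,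
        ‖iteratedFDerivWithin ℝ i (v ε) Ω x‖ ≤ C * ε ^ q)
    (K : Set (EuclideanSpace ℝ (Fin n))) (hK : K ⊆ Ω) (hKc : IsCompact K) (k q : ℕ) :
    ∃ C : ℝ, ∀ᶠ ε in 𝓝[>] (0:ℝ), ∀ x ∈ K,
      ‖iteratedFDerivWithin ℝ k (fun x => f (u ε x + v ε x) - f (u ε x)) Ω x‖ ≤ C * ε ^ q := by
  have hΩu : UniqueDiffOn ℝ Ω := hΩ.uniqueDiffOn
  obtain ⟨Cf, hCf1, pf, hfb⟩ := hslowU (k+1)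
  obtain ⟨pu, Cu, hCu1, hub⟩ := huU K hK hKc k
  set Q : ℕ := q + pu * (pf + k) with hQ
  obtain ⟨Cv, hCv0, hvb⟩ := hvU K hK hKc k (Q+1)
  set N : ℝ := (Fintype.card (OrderedFinpartition k) : ℝ) with hN
  refine ⟨N * (1+(k:ℝ)) * Cf * 3^pf * 2^k * Cu^(pf+k), ?_⟩
  have hsm : ∀ᶠ ε in 𝓝[>] (0:ℝ), Cv * ε ≤ 1 := by
    have h1 : Tendsto (fun ε : ℝ => Cv * ε) (𝓝 0) (𝓝 (Cv * 0)) :=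
      (continuous_const.mul continuous_id).tendsto 0
    rw [mul_zero] at h1
    exact (h1.eventually (eventually_le_nhds zero_lt_one)).filter_mono nhdsWithin_le_nhds
  filter_upwards [hub, hvb, hsm, Ioo_mem_nhdsGT (zero_lt_one (α := ℝ))]
    with ε hεu hεv hεsm hεI x hx
  have hε0 : (0:ℝ) < ε := hεI.1
  have hε1 : ε ≤ 1 := hεI.2.le
  have hxΩ := hK hx
  have hεp : (0:ℝ) < ε ^ pu := by positivity
  set A : ℝ := Cu * (ε ^ pu)⁻¹ with hA
  have hA1 : 1 ≤ A := by
    have h1 : ε ^ pu ≤ 1 := pow_le_one₀ hε0.le hε1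
    have h2 : (1:ℝ) ≤ (ε ^ pu)⁻¹ := (one_le_inv₀ hεp).mpr h1
    calc (1:ℝ) = 1 * 1 := by ring
      _ ≤ Cu * (ε ^ pu)⁻¹ := mul_le_mul hCu1 h2 zero_le_one (by linarith)
  have hu_i : ∀ i ≤ k, ‖iteratedFDerivWithin ℝ i (u ε) Ω x‖ ≤ A := fun i hi => hεu i hi x hx
  have hεQ0 : (0:ℝ) ≤ ε ^ Q := by positivity
  have hεQ1 : ε ^ Q ≤ 1 := pow_le_one₀ hε0.le hε1
  have hv_i : ∀ i ≤ k, ‖iteratedFDerivWithin ℝ i (v ε) Ω x‖ ≤ ε ^ Q := by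
    intro i hi
    refine (hεv i hi x hx).trans ?_
    calc Cv * ε^(Q+1) = (Cv * ε) * ε^Q := by ring
      _ ≤ 1 * ε^Q := mul_le_mul_of_nonneg_right hεsm hεQ0
      _ = ε^Q := one_mul _
  have huS : ContDiffOn ℝ (⊤:ℕ∞) (u ε) Ω := hu_smooth ε ⟨hε0, hε1⟩
  have hvS : ContDiffOn ℝ (⊤:ℕ∞) (v ε) Ω := hv_smooth ε ⟨hε0, hε1⟩
  set w : EuclideanSpace ℝ (Fin n) → ℝ := fun y => u ε y + v ε y with hwdef
  have hwS : ContDiffOn ℝ (⊤:ℕ∞) w Ω := huS.add hvS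
  have hDw : ∀ i : ℕ, iteratedFDerivWithin ℝ i w Ω x =
      iteratedFDerivWithin ℝ i (u ε) Ω x + iteratedFDerivWithin ℝ i (v ε) Ω x := fun i =>
    iteratedFDerivWithin_add_apply' ((huS.contDiffWithinAt hxΩ).of_le (by exact_mod_cast le_top))
      ((hvS.contDiffWithinAt hxΩ).of_le (by exact_mod_cast le_top)) hΩu hxΩ
  have hDw_le : ∀ i ≤ k, ‖iteratedFDerivWithin ℝ i w Ω x‖ ≤ 2 * A := by
    intro i hi
    rw [hDw i]
    refine (norm_add_le _ _).trans ?_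
    have h2 := le_trans (hv_i i hi) hεQ1
    have h3 := hu_i i hi
    linarith
  have hux_le : |u ε x| ≤ A := by
    have := hu_i 0 (Nat.zero_le k); rwa [norm_iteratedFDerivWithin_zero, Real.norm_eq_abs] at this
  have hvx_le : |v ε x| ≤ ε ^ Q := by
    have := hv_i 0 (Nat.zero_le k); rwa [norm_iteratedFDerivWithin_zero, Real.norm_eq_abs] at this
  have hwx_le : |w x| ≤ 2 * A := by
    have h1 : |w x| ≤ |u ε x| + |v ε x| := abs_add_le _ _
    have h2 := le_trans hvx_le hεQ1
    linarith
  set Mf : ℝ := Cf * (3*A)^pf with hMf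
  have hMf0 : 0 ≤ Mf := by positivity
  have hfd : ∀ i ≤ k+1, ∀ y : ℝ, |y| ≤ 2*A → |iteratedDeriv i f y| ≤ Mf := by
    intro i hi y hy
    refine (hfb i hi y).trans ?_
    exact mul_le_mul_of_nonneg_left
      (pow_le_pow_left₀ (by positivity) (by linarith) pf) (by linarith)
  -- the difference of iterated derivatives, via Faà di Bruno
  have hfc : ContDiffOn ℝ (k:ℕ∞) (fun y => f (w y)) Ω := by
    have := hf.comp_contDiffOn hwS
    exact (this.of_le (by exact_mod_cast le_top))
  have hfcu : ContDiffOn ℝ (k:ℕ∞) (fun y => f (u ε y)) Ω := by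
    have := hf.comp_contDiffOn huS
    exact (this.of_le (by exact_mod_cast le_top))
  have hsub : iteratedFDerivWithin ℝ k (fun y => f (u ε y + v ε y) - f (u ε y)) Ω x =
      iteratedFDerivWithin ℝ k (fun y => f (w y)) Ω x -
        iteratedFDerivWithin ℝ k (fun y => f (u ε y)) Ω x :=
    iter_sub hΩu hfc hfcu hxΩ
  rw [hsub, fdb_formula hΩu hf hwS hxΩ k, fdb_formula hΩu hf huS hxΩ k,
    ← Finset.sum_sub_distrib]
  set Bd : ℝ := (1+(k:ℝ)) * Mf * (2*A)^k * ε^Q with hBd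
  have hterm : ∀ c : OrderedFinpartition k,
      ‖(ftaylorSeries ℝ f (w x)).compAlongOrderedFinpartition (ftaylorSeriesWithin ℝ w Ω x) c
        - (ftaylorSeries ℝ f (u ε x)).compAlongOrderedFinpartition
            (ftaylorSeriesWithin ℝ (u ε) Ω x) c‖ ≤ Bd := by
    intro c
    have hℓk : c.length ≤ k := c.length_le
    set B := c.compAlongOrderedFinpartitionL ℝ (EuclideanSpace ℝ (Fin n)) ℝ ℝ with hB
    set qw := iteratedFDeriv ℝ c.length f (w x) with hqw
    set qu := iteratedFDeriv ℝ c.length f (u ε x) with hqu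
    set pw : ∀ m : Fin c.length, ContinuousMultilinearMap ℝ
        (fun _ : Fin (c.partSize m) ↦ EuclideanSpace ℝ (Fin n)) ℝ :=
      fun m => iteratedFDerivWithin ℝ (c.partSize m) w Ω x with hpw
    set pu' : ∀ m : Fin c.length, ContinuousMultilinearMap ℝ
        (fun _ : Fin (c.partSize m) ↦ EuclideanSpace ℝ (Fin n)) ℝ :=
      fun m => iteratedFDerivWithin ℝ (c.partSize m) (u ε) Ω x with hpu'
    have hrw : (ftaylorSeries ℝ f (w x)).compAlongOrderedFinpartition
        (ftaylorSeriesWithin ℝ w Ω x) c = B qw pw := rfl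
    have hru : (ftaylorSeries ℝ f (u ε x)).compAlongOrderedFinpartition
        (ftaylorSeriesWithin ℝ (u ε) Ω x) c = B qu pu' := rfl
    rw [hrw, hru]
    have split : B qw pw - B qu pu' = ((B qw) pw - (B qu) pw) + ((B qu) pw - (B qu) pu') := by
      abel
    have prodw : ∏ m, ‖pw m‖ ≤ (2*A)^k := by
      calc ∏ m, ‖pw m‖ ≤ ∏ _m : Fin c.length, (2*A) :=
            Finset.prod_le_prod (fun _ _ => norm_nonneg _)
              (fun m _ => hDw_le _ (c.partSize_le m))
        _ = (2*A)^c.length := by simp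
        _ ≤ (2*A)^k := pow_le_pow_right₀ (by linarith) hℓk
    have hqu_le : ‖qu‖ ≤ Mf := by
      rw [hqu, norm_iteratedFDeriv_eq_norm_iteratedDeriv, Real.norm_eq_abs]
      exact hfd c.length (by omega) _ (by linarith)
    have hdiffy : ∀ y : ℝ, DifferentiableAt ℝ (iteratedDeriv c.length f) y := by
      intro y
      exact (hf.differentiable_iteratedDeriv c.length
        (by exact_mod_cast ENat.coe_lt_top c.length)).differentiableAt
    have hqdiff : ‖qw - qu‖ ≤ Mf * ε^Q := by
      have e1 : ‖qw - qu‖ =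
          ‖iteratedDeriv c.length f (w x) - iteratedDeriv c.length f (u ε x)‖ := by
        rw [hqw, hqu, iteratedFDeriv_eq_equiv_comp, Function.comp_apply, Function.comp_apply,
          ← map_sub, LinearIsometryEquiv.norm_map]
      have hseg : ∀ y ∈ uIcc (u ε x) (w x), ‖deriv (iteratedDeriv c.length f) y‖ ≤ Mf := by
        intro y hy
        have hyb : |y| ≤ 2*A := by
          rcases le_total (u ε x) (w x) with hle | hle
          · rw [uIcc_of_le hle] at hy
            exact (abs_le_max_abs_abs hy.1 hy.2).trans (max_le (by linarith) hwx_le)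
          · rw [uIcc_of_ge hle] at hy
            exact (abs_le_max_abs_abs hy.1 hy.2).trans (max_le hwx_le (by linarith))
        rw [Real.norm_eq_abs, ← iteratedDeriv_succ]
        exact hfd (c.length+1) (by omega) y hyb
      have hmvt := Convex.norm_image_sub_le_of_norm_deriv_le
        (f := iteratedDeriv c.length f) (s := uIcc (u ε x) (w x))
        (fun y _ => hdiffy y) hseg (convex_uIcc _ _) left_mem_uIcc right_mem_uIcc
      rw [e1]
      refine hmvt.trans ?_
      have hwu : w x - u ε x = v ε x := by simp [hwdef]
      rw [hwu, Real.norm_eq_abs]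
      exact mul_le_mul_of_nonneg_left hvx_le hMf0
    have t1 : ‖(B qw) pw - (B qu) pw‖ ≤ Mf * ε^Q * (2*A)^k := by
      have h1 : (B qw) pw - (B qu) pw = (B (qw - qu)) pw := by
        rw [map_sub]; rfl
      rw [h1]
      refine (ContinuousMultilinearMap.le_opNorm _ _).trans ?_
      exact mul_le_mul (le_trans (norm_compAlongL_le c _) hqdiff) prodw
        (Finset.prod_nonneg (fun _ _ => norm_nonneg _)) (by positivity)
    have hpw_norm : ‖pw‖ ≤ 2*A :=
      (pi_norm_le_iff_of_nonneg (by linarith)).mpr (fun m => hDw_le _ (c.partSize_le m))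
    have hpu_norm : ‖pu'‖ ≤ 2*A :=
      (pi_norm_le_iff_of_nonneg (by linarith)).mpr
        (fun m => (hu_i _ (c.partSize_le m)).trans (by linarith))
    have hdiff_norm : ‖pw - pu'‖ ≤ ε^Q := by
      refine (pi_norm_le_iff_of_nonneg hεQ0).mpr (fun m => ?_)
      have h2 : (pw - pu') m = iteratedFDerivWithin ℝ (c.partSize m) (v ε) Ω x := by
        simp only [Pi.sub_apply, hpw, hpu']
        rw [hDw]; abel
      rw [h2]; exact hv_i _ (c.partSize_le m)
    have t2 : ‖(B qu) pw - (B qu) pu'‖ ≤ Mf * k * ((2*A)^k * ε^Q) := by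
      refine (ContinuousMultilinearMap.norm_image_sub_le (B qu) pw pu').trans ?_
      have hBqu : ‖B qu‖ ≤ Mf := le_trans (norm_compAlongL_le c _) hqu_le
      have hmax : max ‖pw‖ ‖pu'‖ ≤ 2*A := max_le hpw_norm hpu_norm
      have hmax0 : (0:ℝ) ≤ max ‖pw‖ ‖pu'‖ := le_max_of_le_left (norm_nonneg _)
      have hmaxpow : max ‖pw‖ ‖pu'‖ ^ (Fintype.card (Fin c.length) - 1) ≤ (2*A)^k := by
        rw [Fintype.card_fin]
        calc max ‖pw‖ ‖pu'‖ ^ (c.length - 1) ≤ (2*A) ^ (c.length - 1) :=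
              pow_le_pow_left₀ hmax0 hmax _
          _ ≤ (2*A)^k := pow_le_pow_right₀ (by linarith) (by omega)
      have hcard : ((Fintype.card (Fin c.length)) : ℝ) ≤ (k:ℝ) := by
        rw [Fintype.card_fin]; exact_mod_cast hℓk
      have step : ‖B qu‖ * (Fintype.card (Fin c.length)) *
            max ‖pw‖ ‖pu'‖ ^ (Fintype.card (Fin c.length) - 1) * ‖pw - pu'‖ ≤
          (Mf * k * (2*A)^k) * ε^Q := by
        refine mul_le_mul (mul_le_mul (mul_le_mul hBqu hcard (by positivity) hMf0)
          hmaxpow (by positivity) (by positivity)) hdiff_norm (norm_nonneg _) (by positivity)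
      exact step.trans (le_of_eq (by ring))
    rw [split]
    calc ‖((B qw) pw - (B qu) pw) + ((B qu) pw - (B qu) pu')‖
        ≤ ‖(B qw) pw - (B qu) pw‖ + ‖(B qu) pw - (B qu) pu'‖ := norm_add_le _ _
      _ ≤ Mf * ε^Q * (2*A)^k + Mf * k * ((2*A)^k * ε^Q) := add_le_add t1 t2
      _ = Bd := by rw [hBd]; ring
  refine le_trans (norm_sum_le _ _) ?_
  refine le_trans (Finset.sum_le_sum (fun c _ => hterm c)) ?_
  rw [Finset.sum_const, Finset.card_univ, nsmul_eq_mul]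
  have hApow : A ^ (pf + k) = Cu ^ (pf + k) * (ε ^ (pu * (pf + k)))⁻¹ := by
    rw [hA, mul_pow, inv_pow, ← pow_mul]
  have hpows : (ε ^ (pu*(pf+k)))⁻¹ * ε ^ Q = ε ^ q := by
    rw [hQ, pow_add]
    have hne : (ε ^ (pu*(pf+k)) : ℝ) ≠ 0 := by positivity
    field_simp
  calc ((Fintype.card (OrderedFinpartition k)) : ℝ) * Bd
      = N * (1+(k:ℝ)) * Cf * 3^pf * 2^k * (A^(pf+k)) * ε^Q := by
        rw [hBd, hMf, mul_pow, mul_pow, pow_add, hN]; ring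
    _ = N * (1+(k:ℝ)) * Cf * 3^pf * 2^k * Cu^(pf+k) * ((ε ^ (pu*(pf+k)))⁻¹ * ε^Q) := by
        rw [hApow]; ring
    _ = N * (1+(k:ℝ)) * Cf * 3^pf * 2^k * Cu^(pf+k) * ε^q := by rw [hpows]
    _ ≤ N * (1+(k:ℝ)) * Cf * 3^pf * 2^k * Cu^(pf+k) * ε^q := le_rfl


lemma moderate_unif {n : ℕ} {Ω : Set (EuclideanSpace ℝ (Fin n))}
    {u : ℝ → EuclideanSpace ℝ (Fin n) → ℝ} (hu : IsModerateFamily n Ω u)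
    {K : Set (EuclideanSpace ℝ (Fin n))} (hK : K ⊆ Ω) (hKc : IsCompact K) (k : ℕ) :
    ∃ p : ℕ, ∃ C : ℝ, 1 ≤ C ∧ ∀ᶠ ε in 𝓝[>] (0:ℝ), ∀ i ≤ k, ∀ x ∈ K,
      ‖iteratedFDerivWithin ℝ i (u ε) Ω x‖ ≤ C * (ε ^ p)⁻¹ := by
  induction k with
  | zero =>
    obtain ⟨p, C, hC⟩ := hu K hK hKc 0
    refine ⟨p, max C 1, le_max_right _ _, ?_⟩
    filter_upwards [hC, self_mem_nhdsWithin] with ε hε hε0 i hi x hx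
    obtain rfl : i = 0 := Nat.le_zero.mp hi
    have h1 : (0:ℝ) < ε := hε0
    have h2 : (0:ℝ) ≤ (ε ^ p)⁻¹ := by positivity
    exact (hε x hx).trans (mul_le_mul_of_nonneg_right (le_max_left _ _) h2)
  | succ k ih =>
    obtain ⟨p₁, C₁, hC₁, h₁⟩ := ih
    obtain ⟨p₂, C₂, h₂⟩ := hu K hK hKc (k+1)
    refine ⟨max p₁ p₂, max C₁ (max C₂ 1), le_trans hC₁ (le_max_left _ _), ?_⟩
    filter_upwards [h₁, h₂, Ioo_mem_nhdsGT (zero_lt_one (α := ℝ))]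
      with ε hε1 hε2 hεI i hi x hx
    have hε0 : (0:ℝ) < ε := hεI.1
    have hinv : (0:ℝ) ≤ (ε ^ max p₁ p₂)⁻¹ := by positivity
    have key : ∀ p' ≤ max p₁ p₂, (ε ^ p' : ℝ)⁻¹ ≤ (ε ^ max p₁ p₂)⁻¹ := fun p' hp' =>
      inv_anti₀ (by positivity) (pow_le_pow_of_le_one hε0.le hεI.2.le hp')
    rcases Nat.lt_succ_iff_lt_or_eq.mp (Nat.lt_succ_of_le hi) with h | rfl
    · refine (hε1 i (Nat.lt_succ_iff.mp h) x hx).trans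
        (mul_le_mul (le_max_left _ _) (key _ (le_max_left _ _)) (by positivity)
          (le_trans zero_le_one (le_trans hC₁ (le_max_left _ _))))
    · refine (hε2 x hx).trans
        (mul_le_mul (le_trans (le_max_left _ _) (le_max_right _ _))
          (key _ (le_max_right _ _)) (by positivity) (by
            have := le_trans (le_trans hC₁ (le_max_left C₁ (max C₂ 1))) le_rfl
            linarith))

lemma negligible_unif {n : ℕ} {Ω : Set (EuclideanSpace ℝ (Fin n))}
    {v : ℝ → EuclideanSpace ℝ (Fin n) → ℝ} (hv : IsNegligibleFamily n Ω v)
    {K : Set (EuclideanSpace ℝ (Fin n))} (hK : K ⊆ Ω) (hKc : IsCompact K) (k q : ℕ) :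
    ∃ C : ℝ, 0 ≤ C ∧ ∀ᶠ ε in 𝓝[>] (0:ℝ), ∀ i ≤ k, ∀ x ∈ K,
      ‖iteratedFDerivWithin ℝ i (v ε) Ω x‖ ≤ C * ε ^ q := by
  induction k with
  | zero =>
    obtain ⟨C, hC⟩ := hv K hK hKc 0 q
    refine ⟨max C 0, le_max_right _ _, ?_⟩
    filter_upwards [hC, self_mem_nhdsWithin] with ε hε hε0 i hi x hx
    obtain rfl : i = 0 := Nat.le_zero.mp hi
    have h1 : (0:ℝ) < ε := hε0
    exact (hε x hx).trans (mul_le_mul_of_nonneg_right (le_max_left _ _) (by positivity))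
  | succ k ih =>
    obtain ⟨C₁, hC₁0, h₁⟩ := ih
    obtain ⟨C₂, h₂⟩ := hv K hK hKc (k+1) q
    refine ⟨max C₁ (max C₂ 0), le_trans hC₁0 (le_max_left _ _), ?_⟩
    filter_upwards [h₁, h₂, self_mem_nhdsWithin] with ε hε1 hε2 hε0 i hi x hx
    have hε0' : (0:ℝ) < ε := hε0
    rcases Nat.lt_succ_iff_lt_or_eq.mp (Nat.lt_succ_of_le hi) with h | rfl
    · exact (hε1 i (Nat.lt_succ_iff.mp h) x hx).trans
        (mul_le_mul_of_nonneg_right (le_max_left _ _) (by positivity))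
    · exact (hε2 x hx).trans
        (mul_le_mul_of_nonneg_right (le_trans (le_max_left _ _) (le_max_right _ _))
          (by positivity))

lemma slow_unif {f : ℝ → ℝ}
    (hslow : ∀ k : ℕ, ∃ C > (0:ℝ), ∃ p : ℕ, ∀ y : ℝ,
      |iteratedDeriv k f y| ≤ C * (1 + |y|) ^ p) (k : ℕ) :
    ∃ C : ℝ, 1 ≤ C ∧ ∃ p : ℕ, ∀ i ≤ k, ∀ y : ℝ,
      |iteratedDeriv i f y| ≤ C * (1 + |y|) ^ p := by
  induction k with
  | zero =>
    obtain ⟨C, _, p, hC⟩ := hslow 0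
    refine ⟨max C 1, le_max_right _ _, p, ?_⟩
    intro i hi y
    obtain rfl : i = 0 := Nat.le_zero.mp hi
    exact (hC y).trans (mul_le_mul_of_nonneg_right (le_max_left _ _) (by positivity))
  | succ k ih =>
    obtain ⟨C₁, hC₁, p₁, h₁⟩ := ih
    obtain ⟨C₂, hC₂0, p₂, h₂⟩ := hslow (k+1)
    refine ⟨max C₁ C₂, le_trans hC₁ (le_max_left _ _), max p₁ p₂, ?_⟩
    intro i hi y
    have hy : (1:ℝ) ≤ 1 + |y| := by have := abs_nonneg y; linarith
    have hpow : ∀ p' ≤ max p₁ p₂, (1 + |y|) ^ p' ≤ (1 + |y|) ^ max p₁ p₂ := fun p' hp' =>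
      pow_le_pow_right₀ hy hp'
    rcases Nat.lt_succ_iff_lt_or_eq.mp (Nat.lt_succ_of_le hi) with h | rfl
    · exact (h₁ i (Nat.lt_succ_iff.mp h) y).trans
        (mul_le_mul (le_max_left _ _) (hpow _ (le_max_left _ _)) (by positivity)
          (le_trans zero_le_one (le_trans hC₁ (le_max_left _ _))))
    · exact (h₂ y).trans
        (mul_le_mul (le_max_right _ _) (hpow _ (le_max_right _ _)) (by positivity)
          (le_trans zero_le_one (le_trans hC₁ (le_max_left _ _))))


lemma part1 {n : ℕ}
    (f : ℝ → ℝ) (hf : ContDiff ℝ (⊤ : ℕ∞) f)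
    (hslowU : ∀ k : ℕ, ∃ C : ℝ, 1 ≤ C ∧ ∃ p : ℕ, ∀ i ≤ k, ∀ y : ℝ,
      |iteratedDeriv i f y| ≤ C * (1 + |y|) ^ p)
    (Ω : Set (EuclideanSpace ℝ (Fin n))) (hΩ : IsOpen Ω)
    (u : ℝ → EuclideanSpace ℝ (Fin n) → ℝ)
    (hu_smooth : ∀ ε ∈ Ioc (0:ℝ) 1, ContDiffOn ℝ (⊤ : ℕ∞) (u ε) Ω)
    (huU : ∀ K : Set (EuclideanSpace ℝ (Fin n)), K ⊆ Ω → IsCompact K → ∀ k : ℕ,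
      ∃ p : ℕ, ∃ C : ℝ, 1 ≤ C ∧ ∀ᶠ ε in 𝓝[>] (0:ℝ), ∀ i ≤ k, ∀ x ∈ K,
        ‖iteratedFDerivWithin ℝ i (u ε) Ω x‖ ≤ C * (ε ^ p)⁻¹)
    (K : Set (EuclideanSpace ℝ (Fin n))) (hK : K ⊆ Ω) (hKc : IsCompact K) (k : ℕ) :
    ∃ p : ℕ, ∃ C : ℝ, ∀ᶠ ε in 𝓝[>] (0:ℝ), ∀ x ∈ K,
      ‖iteratedFDerivWithin ℝ k (fun x => f (u ε x)) Ω x‖ ≤ C * (ε ^ p)⁻¹ := by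
  obtain ⟨Cf, hCf1, pf, hfb⟩ := hslowU k
  obtain ⟨pu, Cu, hCu1, hub⟩ := huU K hK hKc k
  refine ⟨pu * (pf + k), (k.factorial : ℝ) * Cf * 2 ^ pf * Cu ^ (pf + k), ?_⟩
  filter_upwards [hub, Ioo_mem_nhdsGT (zero_lt_one (α := ℝ))] with ε hεu hεI
  intro x hx
  have hε0 : (0:ℝ) < ε := hεI.1
  have hε1 : ε ≤ 1 := hεI.2.le
  have hεp : (0:ℝ) < ε ^ pu := by positivity
  set A : ℝ := Cu * (ε ^ pu)⁻¹ with hA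
  have hApos : 0 < A := by positivity
  have hA1 : 1 ≤ A := by
    have h1 : ε ^ pu ≤ 1 := pow_le_one₀ hε0.le hε1
    have h2 : (1:ℝ) ≤ (ε ^ pu)⁻¹ := (one_le_inv₀ hεp).mpr h1
    calc (1:ℝ) = 1 * 1 := by ring
      _ ≤ Cu * (ε ^ pu)⁻¹ := mul_le_mul hCu1 h2 zero_le_one (by linarith)
  have hu0 : ‖u ε x‖ ≤ A := by
    have := hεu 0 (Nat.zero_le k) x hx
    rwa [norm_iteratedFDerivWithin_zero] at this
  have hC : ∀ i ≤ k, ‖iteratedFDerivWithin ℝ i f univ (u ε x)‖ ≤ Cf * (2 * A) ^ pf := by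
    intro i hi
    rw [iteratedFDerivWithin_univ, norm_iteratedFDeriv_eq_norm_iteratedDeriv, Real.norm_eq_abs]
    refine (hfb i hi _).trans ?_
    have h1 : 1 + |u ε x| ≤ 2 * A := by
      have : |u ε x| ≤ A := by rwa [Real.norm_eq_abs] at hu0
      linarith
    exact mul_le_mul_of_nonneg_left
      (pow_le_pow_left₀ (by positivity) h1 pf) (by linarith)
  have hD : ∀ i, 1 ≤ i → i ≤ k → ‖iteratedFDerivWithin ℝ i (u ε) Ω x‖ ≤ A ^ i := by
    intro i h1i hik
    refine (hεu i hik x hx).trans ?_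
    exact le_self_pow₀ hA1 (by omega)
  have comp_le := norm_iteratedFDerivWithin_comp_le (𝕜 := ℝ) (g := f) (f := u ε) (n := k)
    (N := ((⊤ : ℕ∞) : WithTop ℕ∞)) (hf.contDiffOn) (hu_smooth ε ⟨hε0, hε1⟩) (by exact_mod_cast le_top)
    uniqueDiffOn_univ hΩ.uniqueDiffOn (mapsTo_univ _ _) (hK hx)
    (C := Cf * (2 * A) ^ pf) (D := A) hC hD
  have heq : (fun x => f (u ε x)) = f ∘ u ε := rfl
  rw [heq]
  refine comp_le.trans (le_of_eq ?_)
  have hApow : A ^ (pf + k) = Cu ^ (pf + k) * (ε ^ (pu * (pf + k)))⁻¹ := by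
    rw [hA, mul_pow, inv_pow, ← pow_mul]
  calc (k.factorial : ℝ) * (Cf * (2 * A) ^ pf) * A ^ k
      = (k.factorial : ℝ) * Cf * 2 ^ pf * (A ^ pf * A ^ k) := by rw [mul_pow]; ring
    _ = (k.factorial : ℝ) * Cf * 2 ^ pf * A ^ (pf + k) := by rw [pow_add]
    _ = (k.factorial : ℝ) * Cf * 2 ^ pf * Cu ^ (pf + k) * (ε ^ (pu * (pf + k)))⁻¹ := by
        rw [hApow]; ring


/-- **Superposition with slowly increasing functions is well defined on Colombeau
generalized functions:** if `f ∈ C^∞(ℝ)` is slowly increasing (all derivatives polynomially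
bounded) and `(u ε)` is a moderate family of smooth functions on an open `Ω ⊆ ℝⁿ`, then
`(f ∘ u_ε)` is moderate; and if `(v ε)` is negligible, then
`(f ∘ (u_ε + v_ε) - f ∘ u_ε)` is negligible. -/
theorem slowlyIncreasing_superposition {n : ℕ}
    (f : ℝ → ℝ) (hf : ContDiff ℝ (⊤ : ℕ∞) f)
    (hslow : ∀ k : ℕ, ∃ C > (0:ℝ), ∃ p : ℕ, ∀ y : ℝ,
      |iteratedDeriv k f y| ≤ C * (1 + |y|) ^ p)
    (Ω : Set (EuclideanSpace ℝ (Fin n))) (hΩ : IsOpen Ω)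
    (u : ℝ → EuclideanSpace ℝ (Fin n) → ℝ)
    (hu_smooth : ∀ ε ∈ Ioc (0:ℝ) 1, ContDiffOn ℝ (⊤ : ℕ∞) (u ε) Ω)
    (hu : IsModerateFamily n Ω u) :
    IsModerateFamily n Ω (fun ε x => f (u ε x)) ∧
    ∀ v : ℝ → EuclideanSpace ℝ (Fin n) → ℝ,
      (∀ ε ∈ Ioc (0:ℝ) 1, ContDiffOn ℝ (⊤ : ℕ∞) (v ε) Ω) →
      IsNegligibleFamily n Ω v →
      IsNegligibleFamily n Ω (fun ε x => f (u ε x + v ε x) - f (u ε x)) := by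
  have hf' : ContDiff ℝ ((⊤:ℕ∞) : WithTop ℕ∞) f := hf.of_le (by simp)
  have hu_smooth' : ∀ ε ∈ Ioc (0:ℝ) 1, ContDiffOn ℝ ((⊤:ℕ∞) : WithTop ℕ∞) (u ε) Ω :=
    fun ε hε => (hu_smooth ε hε).of_le (by simp)
  constructor
  · intro K hK hKc k
    exact part1 f hf' (slow_unif hslow) Ω hΩ u hu_smooth'
      (fun K hK hKc k => moderate_unif hu hK hKc k) K hK hKc k
  · intro v hv_smooth hv K hK hKc k q
    exact part2 f hf' (slow_unif hslow) Ω hΩ u v hu_smooth'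
      (fun ε hε => (hv_smooth ε hε).of_le (by simp))
      (fun K hK hKc k => moderate_unif hu hK hKc k)
      (fun K hK hKc k q => negligible_unif hv hK hKc k q) K hK hKc k q
end

section
/- For α > 0 and y ∈ ℝ with y ≠ 0, with θ(α,y) = α·cosh(y)/√(1 + α²·sinh²(y)), one has ∫₀¹ |θ(α,σy) − 1| dσ ≤ (2|α² − 1|/(α|y|))·(1 − e^{−|y|}). -/
set_option maxHeartbeats 1000000


/-- `theta α y = α cosh y / √(1 + α² sinh² y)`, the derivative with respect to `y` of
`arsinh (α · sinh y)`. -/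
noncomputable def theta (α y : ℝ) : ℝ :=
  α * Real.cosh y / Real.sqrt (1 + α ^ 2 * Real.sinh y ^ 2)

lemma abs_theta_sub_one_le (α : ℝ) (hα : 0 < α) (u : ℝ) :
    |theta α u - 1| ≤ 2 * |α ^ 2 - 1| / α * Real.exp (-|u|) := by
  have hcosh : 0 < Real.cosh u := Real.cosh_pos u
  set S : ℝ := 1 + α ^ 2 * Real.sinh u ^ 2 with hSdef
  have hS1 : (1:ℝ) ≤ S := by nlinarith [sq_nonneg (α * Real.sinh u)]
  have hS0 : (0:ℝ) < S := lt_of_lt_of_le one_pos hS1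
  have hsq1 : (1:ℝ) ≤ Real.sqrt S := by
    rw [show (1:ℝ) = Real.sqrt 1 by simp]
    exact Real.sqrt_le_sqrt hS1
  have hsq0 : (0:ℝ) < Real.sqrt S := lt_of_lt_of_le one_pos hsq1
  have hden : 0 < α * Real.cosh u := mul_pos hα hcosh
  have hsum : 0 < α * Real.cosh u + Real.sqrt S := by positivity
  have hsqS : Real.sqrt S ^ 2 = S := Real.sq_sqrt hS0.le
  have hkey : |α * Real.cosh u - Real.sqrt S| * (α * Real.cosh u + Real.sqrt S)
      = |α ^ 2 - 1| := by
    rw [← abs_of_pos hsum, ← abs_mul]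
    congr 1
    have hc := Real.cosh_sq u
    nlinarith [hsqS, hc]
  have h1 : theta α u - 1 = (α * Real.cosh u - Real.sqrt S) / Real.sqrt S := by
    unfold theta
    rw [← hSdef]
    field_simp
  have h2 : |α * Real.cosh u - Real.sqrt S|
      = |α ^ 2 - 1| / (α * Real.cosh u + Real.sqrt S) := by
    rw [eq_div_iff hsum.ne']
    exact hkey
  have hexp : Real.exp |u| ≤ 2 * Real.cosh u := by
    rw [Real.cosh_eq]
    rcases abs_cases u with ⟨h, _⟩ | ⟨h, _⟩ <;> rw [h] <;>
      nlinarith [Real.exp_pos u, Real.exp_pos (-u)]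
  calc |theta α u - 1| = |α * Real.cosh u - Real.sqrt S| / Real.sqrt S := by
        rw [h1, abs_div, abs_of_pos hsq0]
    _ ≤ |α * Real.cosh u - Real.sqrt S| := div_le_self (abs_nonneg _) hsq1
    _ = |α ^ 2 - 1| / (α * Real.cosh u + Real.sqrt S) := h2
    _ ≤ |α ^ 2 - 1| / (α * Real.cosh u) := by
        gcongr
        linarith
    _ ≤ |α ^ 2 - 1| / (α * Real.exp |u| / 2) := by
        have hep := Real.exp_pos |u|
        gcongr
        nlinarith
    _ = 2 * |α ^ 2 - 1| / α * Real.exp (-|u|) := by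
        rw [Real.exp_neg]
        have := Real.exp_pos |u|
        field_simp


lemma theta_continuous (α : ℝ) : Continuous (theta α) := by
  have hden : ∀ x : ℝ, Real.sqrt (1 + α ^ 2 * Real.sinh x ^ 2) ≠ 0 := by
    intro x
    have h1 : (1:ℝ) ≤ 1 + α ^ 2 * Real.sinh x ^ 2 := by
      nlinarith [sq_nonneg (α * Real.sinh x)]
    exact (Real.sqrt_pos.mpr (lt_of_lt_of_le one_pos h1)).ne'
  exact (continuous_const.mul Real.continuous_cosh).div
    (Real.continuous_sqrt.comp (continuous_const.add
      (continuous_const.mul (Real.continuous_sinh.pow 2)))) hden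

/-- For `α > 0` and `y ≠ 0`, the averaged deviation of `θ(α,·)` from `1` along the segment
from `0` to `y` satisfies `∫₀¹ |θ(α,σy) − 1| dσ ≤ (2|α²−1|/(α|y|))·(1 − e^{−|y|})`. -/
theorem integral_theta_sub_one_le (α y : ℝ) (hα : 0 < α) (hy : y ≠ 0) :
    ∫ σ in (0:ℝ)..1, |theta α (σ * y) - 1| ≤
      2 * |α ^ 2 - 1| / (α * |y|) * (1 - Real.exp (-|y|)) := by
  have hc : (0:ℝ) < |y| := abs_pos.mpr hy
  have hθcont : Continuous (theta α) := theta_continuous α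
  have hint1 : IntervalIntegrable (fun σ => |theta α (σ * y) - 1|)
      MeasureTheory.volume 0 1 := by
    apply Continuous.intervalIntegrable
    exact ((hθcont.comp (continuous_id.mul continuous_const)).sub continuous_const).abs
  have hint2 : IntervalIntegrable (fun σ => 2 * |α ^ 2 - 1| / α * Real.exp (-|y| * σ))
      MeasureTheory.volume 0 1 := by
    apply Continuous.intervalIntegrable
    exact continuous_const.mul (Real.continuous_exp.comp (continuous_const.mul continuous_id))
  have hmono : ∀ σ ∈ Set.Icc (0:ℝ) 1,
      |theta α (σ * y) - 1| ≤ 2 * |α ^ 2 - 1| / α * Real.exp (-|y| * σ) := by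
    intro σ hσ
    have h := abs_theta_sub_one_le α hα (σ * y)
    rw [abs_mul, abs_of_nonneg hσ.1] at h
    convert h using 3
    ring
  have hstep := intervalIntegral.integral_mono_on (μ := MeasureTheory.volume)
    (zero_le_one) hint1 hint2 hmono
  have hval : ∫ σ in (0:ℝ)..1, Real.exp (-|y| * σ) = (1 - Real.exp (-|y|)) / |y| := by
    have hne : (-|y|) ≠ 0 := by simpa using hc.ne'
    rw [intervalIntegral.integral_comp_mul_left Real.exp hne]
    rw [integral_exp]
    rw [show -|y| * 0 = 0 by ring, show -|y| * 1 = -|y| by ring]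
    rw [Real.exp_zero, smul_eq_mul]
    field_simp
    ring
  rw [intervalIntegral.integral_const_mul, hval] at hstep
  calc ∫ σ in (0:ℝ)..1, |theta α (σ * y) - 1|
      ≤ 2 * |α ^ 2 - 1| / α * ((1 - Real.exp (-|y|)) / |y|) := hstep
    _ = 2 * |α ^ 2 - 1| / (α * |y|) * (1 - Real.exp (-|y|)) := by
        field_simp
end

section
/- Let F : ℝ → ℝ be smooth with F′(y) > 0 for all y and F(y) = sgn(y)·√|y| for |y| ≥ 1 (so F is an increasing bijection of ℝ with inverse F^{−1}). Let η ≥ 0 and let ρ ∈ C_c^∞(ℝ) with supp ρ ⊆ [−1,1] and ∫ρ(y)dy = 1. Then for every ψ ∈ C_c^∞(ℝ²): lim_{ε→0⁺} ∬_{ℝ²} F^{−1}( η + F( ε^{−2}ρ′(x/ε) ) ) ψ(x,t) dx dt = F^{−1}(η + F(0))·∬_{ℝ²} ψ(x,t) dx dt + 2η·(∫_ℝ √|ρ′(y)| dy)·∫_ℝ ψ(0,t) dt − ∫_ℝ (∂_x ψ)(0,t) dt. That is, the family F^{−1}(η + F(ρ′_ε(x))), with ρ_ε(x) = ε^{−1}ρ(x/ε),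 converges in the sense of distributions on ℝ² to F^{−1}(η+F(0)) + 2η(∫√|ρ′|)·δ(x) + δ′(x), where δ(x), δ′(x) are concentrated on the t-axis. -/
open Topology Filter MeasureTheory

private lemma aux_integrable {g : ℝ → ℝ} (hg : Continuous g) (a b : ℝ)
    (h0 : ∀ y, y ∉ Set.Icc a b → g y = 0) : Integrable g :=
  hg.integrable_of_hasCompactSupport (HasCompactSupport.intro isCompact_Icc h0)

private lemma aux_int_bound {g : ℝ → ℝ} (hgi : Integrable g) (T c : ℝ) (hT : 0 ≤ T)
    (hg : ∀ t, |g t| ≤ c) (h0 : ∀ t, T < |t| → g t = 0) :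
    |∫ t, g t| ≤ 2 * T * c := by
  have hb_int : Integrable ((Set.Icc (-T) T).indicator (fun _ => c)) := by
    exact (integrableOn_const measure_Icc_lt_top.ne).integrable_indicator
      measurableSet_Icc
  have hle : ∀ t, |g t| ≤ (Set.Icc (-T) T).indicator (fun _ => c) t := by
    intro t
    by_cases ht : t ∈ Set.Icc (-T) T
    · rw [Set.indicator_of_mem ht]; exact hg t
    · rw [Set.indicator_of_notMem ht]
      have h2 : T < |t| := by
        rw [Set.mem_Icc, ← abs_le] at ht; exact lt_of_not_ge ht
      rw [h0 t h2]; simp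
  have h1 : |∫ t, g t| ≤ ∫ t, |g t| := by
    simpa [Real.norm_eq_abs] using norm_integral_le_integral_norm (μ := volume) g
  have h2 : ∫ t, |g t| ≤ ∫ t, (Set.Icc (-T) T).indicator (fun _ => c) t :=
    integral_mono hgi.abs hb_int hle
  have h3 : ∫ t, (Set.Icc (-T) T).indicator (fun _ => c) t = 2 * T * c := by
    rw [integral_indicator_const _ measurableSet_Icc, Real.volume_real_Icc, smul_eq_mul,
      max_eq_left (by linarith)]
    ring
  linarith

private lemma aux_not_Icc {a t : ℝ} (ht : t ∉ Set.Icc (-a) a) : a < |t| := by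
  rw [Set.mem_Icc, ← abs_le] at ht; exact lt_of_not_ge ht

/-- **Distributional shadow of the nonlinear transform of a `δ′` wave.**  Let `F` be a
smooth increasing bijection of `ℝ` with `F(y) = sgn(y)√|y|` for `|y| ≥ 1`, with inverse
`Finv`, and `η ≥ 0`.  For a mollifier `ρ ∈ C_c^∞(ℝ)` with support in `[−1,1]` and `∫ρ = 1`,
the family `(x,t) ↦ F⁻¹(η + F(ρ′_ε(x)))`, `ρ_ε(x) = ε⁻¹ρ(x/ε)` (so
`ρ′_ε(x) = ε⁻²ρ′(x/ε)`), converges in the sense of distributions on `ℝ²` to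
`F⁻¹(η + F(0)) + 2η(∫√|ρ′|)·δ(x) + δ′(x)`, with `δ`, `δ′` concentrated on the `t`-axis. -/
theorem nonlinear_transform_delta_prime_limit
    (F Finv : ℝ → ℝ) (hF : ContDiff ℝ (⊤ : ℕ∞) F) (hF' : ∀ y : ℝ, 0 < deriv F y)
    (hFform : ∀ y : ℝ, 1 ≤ |y| → F y = Real.sign y * Real.sqrt |y|)
    (hinv₁ : Function.LeftInverse Finv F) (hinv₂ : Function.RightInverse Finv F)
    (η : ℝ) (hη : 0 ≤ η)
    (ρ : ℝ → ℝ) (hρs : ContDiff ℝ (⊤ : ℕ∞) ρ) (hρsupp : tsupport ρ ⊆ Set.Icc (-1) 1)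
    (hρ1 : ∫ y : ℝ, ρ y = 1)
    (ψ : ℝ × ℝ → ℝ) (hψ : ContDiff ℝ (⊤ : ℕ∞) ψ) (hψc : HasCompactSupport ψ) :
    Tendsto
      (fun ε : ℝ => ∫ x : ℝ, ∫ t : ℝ,
        Finv (η + F ((ε ^ 2)⁻¹ * deriv ρ (x / ε))) * ψ (x, t))
      (𝓝[>] 0)
      (𝓝 (Finv (η + F 0) * (∫ x : ℝ, ∫ t : ℝ, ψ (x, t)) +
        2 * η * (∫ y : ℝ, Real.sqrt |deriv ρ y|) * (∫ t : ℝ, ψ (0, t)) -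
        ∫ t : ℝ, deriv (fun x => ψ (x, t)) 0)) := by
  -- Basic facts about F and Finv
  have hFc : Continuous F := hF.continuous
  have hFmono : StrictMono F := strictMono_of_deriv_pos hF'
  have hFsurj : Function.Surjective F := hinv₂.surjective
  have hFinvmono : Monotone Finv := by
    intro a b hab
    obtain ⟨u, rfl⟩ := hFsurj a
    obtain ⟨v, rfl⟩ := hFsurj b
    rw [hinv₁ u, hinv₁ v]
    exact hFmono.le_iff_le.mp hab
  have hFinvcont : Continuous Finv :=
    Monotone.continuous_of_surjective hFinvmono hinv₁.surjective
  set G : ℝ → ℝ := fun v => Finv (η + F v) with hGdef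
  have hGcont : Continuous G := hFinvcont.comp (continuous_const.add hFc)
  have hFinv_pos : ∀ w : ℝ, 1 ≤ w → Finv w = w ^ 2 := by
    intro w hw
    have h1 : F (w ^ 2) = w := by
      have hw2 : (1:ℝ) ≤ |w ^ 2| := by
        rw [abs_of_nonneg (sq_nonneg w)]; nlinarith
      rw [hFform _ hw2, abs_of_nonneg (sq_nonneg w),
        Real.sign_of_pos (by nlinarith), Real.sqrt_sq_eq_abs,
        abs_of_nonneg (by linarith), one_mul]
    calc Finv w = Finv (F (w ^ 2)) := by rw [h1]
      _ = w ^ 2 := hinv₁ _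
  have hFinv_neg : ∀ w : ℝ, w ≤ -1 → Finv w = -(w ^ 2) := by
    intro w hw
    have h1 : F (-(w ^ 2)) = w := by
      have hw2 : (1:ℝ) ≤ |(-(w ^ 2))| := by
        rw [abs_neg, abs_of_nonneg (sq_nonneg w)]; nlinarith
      rw [hFform _ hw2, abs_neg, abs_of_nonneg (sq_nonneg w),
        Real.sign_of_neg (by nlinarith), Real.sqrt_sq_eq_abs,
        abs_of_nonpos (by linarith)]
      ring
    calc Finv w = Finv (F (-(w ^ 2))) := by rw [h1]
      _ = -(w ^ 2) := hinv₁ _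
  have hGpos : ∀ v : ℝ, 1 ≤ v → G v = (η + Real.sqrt v) ^ 2 := by
    intro v hv
    have hFv : F v = Real.sqrt v := by
      rw [hFform v (by rw [abs_of_nonneg (by linarith)]; exact hv),
        Real.sign_of_pos (by linarith), abs_of_nonneg (by linarith), one_mul]
    have hsv : (1:ℝ) ≤ Real.sqrt v := by
      have := Real.sqrt_le_sqrt hv
      rwa [Real.sqrt_one] at this
    show Finv (η + F v) = _
    rw [hFv, hFinv_pos _ (by linarith)]
  have hGneg : ∀ v : ℝ, v ≤ -((1+η)^2) → G v = -((η - Real.sqrt (-v)) ^ 2) := by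
    intro v hv
    have h1 : (1:ℝ) ≤ (1+η)^2 := by nlinarith
    have hv1 : v ≤ -1 := by linarith
    have hFv : F v = -Real.sqrt (-v) := by
      rw [hFform v (by rw [abs_of_nonpos (by linarith)]; linarith),
        Real.sign_of_neg (by linarith), abs_of_nonpos (by linarith)]
      ring
    have hsv : 1 + η ≤ Real.sqrt (-v) := by
      have h2 : (1+η)^2 ≤ -v := by linarith
      have := Real.sqrt_le_sqrt h2
      rwa [Real.sqrt_sq (by linarith)] at this
    show Finv (η + F v) = _
    rw [hFv, hFinv_neg _ (by linarith)]
    ring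
  set R : ℝ → ℝ := fun v => G v - v - 2 * η * Real.sqrt |v| with hRdef
  have hRcont : Continuous R := by
    apply (hGcont.sub continuous_id).sub
    exact (continuous_const.mul (Real.continuous_sqrt.comp continuous_abs))
  have hR0 : R 0 = G 0 := by simp [hRdef]
  have hGsplit : ∀ v : ℝ, G v = v + 2 * η * Real.sqrt |v| + R v := by
    intro v; rw [hRdef]; ring
  obtain ⟨CR, hCR⟩ := (isCompact_Icc (a := -((1+η)^2)) (b := (1+η)^2)).exists_bound_of_continuousOn
    hRcont.continuousOn
  have hK : ∀ v : ℝ, |R v| ≤ max CR (η^2) := by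
    intro v
    rcases le_or_gt v (-((1+η)^2)) with h | h
    · have hv0 : v ≤ 0 := by nlinarith
      have hs : Real.sqrt (-v) ^ 2 = -v := Real.sq_sqrt (by linarith)
      have hRv : R v = -(η^2) := by
        rw [hRdef]
        simp only
        rw [hGneg v h, abs_of_nonpos hv0]
        linear_combination -hs
      rw [hRv, abs_neg, abs_of_nonneg (sq_nonneg η)]
      exact le_max_right _ _
    rcases le_or_gt ((1+η)^2) v with h2 | h2
    · have hv1 : (1:ℝ) ≤ v := le_trans (by nlinarith) h2
      have hs : Real.sqrt v ^ 2 = v := Real.sq_sqrt (by linarith)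
      have hRv : R v = η^2 := by
        rw [hRdef]
        simp only
        rw [hGpos v hv1, abs_of_nonneg (by linarith)]
        linear_combination hs
      rw [hRv, abs_of_nonneg (sq_nonneg η)]
      exact le_max_right _ _
    · have := hCR v ⟨h.le, h2.le⟩
      rw [Real.norm_eq_abs] at this
      exact le_trans this (le_max_left _ _)
  set K := max CR (η^2) with hKdef
  have hK0 : (0:ℝ) ≤ K := le_trans (abs_nonneg _) (hK 0)
  -- facts about ψ
  obtain ⟨r, hr⟩ := hψc.isBounded.subset_closedBall (0 : ℝ × ℝ)
  set T := max r 1 with hTdef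
  have hT0 : (0:ℝ) < T := lt_of_lt_of_le one_pos (le_max_right r 1)
  have hrT : r ≤ T := le_max_left r 1
  have hψ0 : ∀ x t : ℝ, T < |t| → ψ (x, t) = 0 := by
    intro x t ht
    by_contra h
    have hmem : (x, t) ∈ tsupport ψ := subset_tsupport ψ (Function.mem_support.mpr h)
    have h2 := hr hmem
    rw [Metric.mem_closedBall, Prod.dist_eq] at h2
    simp only [Prod.fst_zero, Prod.snd_zero] at h2
    have h3 : dist t 0 ≤ r := le_trans (le_max_right _ _) h2
    rw [Real.dist_eq, sub_zero] at h3
    linarith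
  have hψ0x : ∀ x t : ℝ, T < |x| → ψ (x, t) = 0 := by
    intro x t hx
    by_contra h
    have hmem : (x, t) ∈ tsupport ψ := subset_tsupport ψ (Function.mem_support.mpr h)
    have h2 := hr hmem
    rw [Metric.mem_closedBall, Prod.dist_eq] at h2
    simp only [Prod.fst_zero, Prod.snd_zero] at h2
    have h3 : dist x 0 ≤ r := le_trans (le_max_left _ _) h2
    rw [Real.dist_eq, sub_zero] at h3
    linarith
  obtain ⟨Mψ, hMψn⟩ := hψc.exists_bound_of_continuous hψ.continuous
  have hMψ : ∀ p : ℝ × ℝ, |ψ p| ≤ Mψ := fun p => by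
    simpa [Real.norm_eq_abs] using hMψn p
  have hMψ0 : (0:ℝ) ≤ Mψ := le_trans (abs_nonneg _) (hMψ 0)
  obtain ⟨Lψ, hLψ⟩ := ContDiff.lipschitzWith_of_hasCompactSupport hψc hψ (by simp)
  have hψlip : ∀ x x' t : ℝ, |ψ (x, t) - ψ (x', t)| ≤ (Lψ : ℝ) * |x - x'| := by
    intro x x' t
    have h1 := hLψ.dist_le_mul (x, t) (x', t)
    rw [Prod.dist_eq] at h1
    simp only [dist_self] at h1
    rw [max_eq_left dist_nonneg] at h1
    simpa [Real.dist_eq] using h1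
  -- the function φ
  set φ : ℝ → ℝ := fun x => ∫ t, ψ (x, t) with hφdef
  have hψtcont : ∀ x : ℝ, Continuous fun t => ψ (x, t) := fun x =>
    hψ.continuous.comp (continuous_const.prodMk continuous_id)
  have hψtint : ∀ x : ℝ, Integrable fun t => ψ (x, t) := fun x =>
    aux_integrable (hψtcont x) (-T) T (fun t ht => hψ0 x t (aux_not_Icc ht))
  have hφbdd : ∀ x, |φ x| ≤ 2 * T * Mψ := fun x =>
    aux_int_bound (hψtint x) T Mψ hT0.le (fun t => hMψ _) (fun t ht => hψ0 x t ht)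
  have hφlip : ∀ x x', |φ x - φ x'| ≤ 2 * T * ((Lψ : ℝ) * |x - x'|) := by
    intro x x'
    have h1 : φ x - φ x' = ∫ t, (ψ (x, t) - ψ (x', t)) :=
      (integral_sub (hψtint x) (hψtint x')).symm
    rw [h1]
    exact aux_int_bound ((hψtint x).sub (hψtint x')) T _ hT0.le
      (fun t => by simp only [Pi.sub_apply]; exact hψlip x x' t)
      (fun t ht => by simp only [Pi.sub_apply]; rw [hψ0 x t ht, hψ0 x' t ht, sub_zero])
  have hφcont : Continuous φ := by
    have hlip : LipschitzWith (⟨2 * T, by positivity⟩ * Lψ) φ := by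
      apply LipschitzWith.of_dist_le_mul
      intro x x'
      rw [Real.dist_eq, Real.dist_eq]
      calc |φ x - φ x'| ≤ 2 * T * ((Lψ : ℝ) * |x - x'|) := hφlip x x'
        _ = ((⟨2 * T, by positivity⟩ * Lψ : NNReal) : ℝ) * |x - x'| := by
            show 2 * T * ((Lψ : ℝ) * |x - x'|) = (2 * T * (Lψ : ℝ)) * |x - x'|; ring
    exact hlip.continuous
  have hφ0 : ∀ x : ℝ, T < |x| → φ x = 0 := by
    intro x hx
    have h1 : (fun t => ψ (x, t)) = fun _ => (0:ℝ) := funext fun t => hψ0x x t hx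
    rw [hφdef]
    simp only
    rw [h1, integral_zero]
  have hφint : Integrable φ :=
    aux_integrable hφcont (-T) T (fun x hx => hφ0 x (aux_not_Icc hx))
  -- derivative of φ at 0
  obtain ⟨Cd, hCd⟩ := (hψc.fderiv ℝ).exists_bound_of_continuous (hψ.continuous_fderiv (by simp))
  have hpd : ∀ x t : ℝ, HasDerivAt (fun x' => ψ (x', t)) (fderiv ℝ ψ (x, t) (1, 0)) x := by
    intro x t
    have h1 : HasFDerivAt ψ (fderiv ℝ ψ (x, t)) (x, t) :=
      (hψ.differentiable (by simp) (x, t)).hasFDerivAt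
    have h2 : HasDerivAt (fun x' : ℝ => ((x' : ℝ), t)) (1, 0) x :=
      (hasDerivAt_id x).prodMk (hasDerivAt_const x t)
    exact h1.comp_hasDerivAt x h2
  have hpdeq : ∀ x t : ℝ, deriv (fun x' => ψ (x', t)) x = fderiv ℝ ψ (x, t) (1, 0) :=
    fun x t => (hpd x t).deriv
  have hone : ‖((1 : ℝ), (0 : ℝ))‖ = 1 := by
    rw [Prod.norm_def]
    simp
  have hpdbd : ∀ x t : ℝ, ‖fderiv ℝ ψ (x, t) (1, 0)‖ ≤ Cd := by
    intro x t
    calc ‖fderiv ℝ ψ (x, t) (1, 0)‖ ≤ ‖fderiv ℝ ψ (x, t)‖ * ‖((1:ℝ), (0:ℝ))‖ :=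
        ContinuousLinearMap.le_opNorm _ _
      _ ≤ Cd * 1 := by rw [hone]; exact mul_le_mul_of_nonneg_right (hCd _) zero_le_one
      _ = Cd := mul_one Cd
  have hpd0 : ∀ x t : ℝ, T < |t| → deriv (fun x' => ψ (x', t)) x = 0 := by
    intro x t ht
    have h1 : (fun x' : ℝ => ψ (x', t)) = fun _ => (0:ℝ) := funext fun x' => hψ0 x' t ht
    rw [h1, deriv_const]
  have hφD : HasDerivAt φ (∫ t : ℝ, deriv (fun x => ψ (x, t)) 0) 0 := by
    have hmeas : AEStronglyMeasurable (fun t : ℝ => deriv (fun x' => ψ (x', t)) 0) volume := by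
      have hc : Continuous fun t : ℝ => fderiv ℝ ψ (0, t) (1, 0) :=
        Continuous.clm_apply ((hψ.continuous_fderiv (by simp)).comp
          (continuous_const.prodMk continuous_id)) continuous_const
      have h2 : (fun t : ℝ => deriv (fun x' => ψ (x', t)) 0) =
          fun t : ℝ => fderiv ℝ ψ (0, t) (1, 0) := funext fun t => hpdeq 0 t
      rw [h2]
      exact hc.aestronglyMeasurable
    have hbound : ∀ᵐ t : ℝ, ∀ x ∈ Metric.ball (0:ℝ) 1,
        ‖deriv (fun x' => ψ (x', t)) x‖ ≤ (Set.Icc (-T) T).indicator (fun _ => Cd) t := by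
      refine Eventually.of_forall fun t => fun x _ => ?_
      by_cases ht : t ∈ Set.Icc (-T) T
      · rw [Set.indicator_of_mem ht, hpdeq]
        exact hpdbd x t
      · rw [Set.indicator_of_notMem ht, hpd0 x t (aux_not_Icc ht)]
        simp
    have hbint : Integrable ((Set.Icc (-T) T).indicator (fun _ => Cd)) :=
      (integrableOn_const measure_Icc_lt_top.ne).integrable_indicator measurableSet_Icc
    have hdiff : ∀ᵐ t : ℝ, ∀ x ∈ Metric.ball (0:ℝ) 1,
        HasDerivAt (fun x' => ψ (x', t)) (deriv (fun x' => ψ (x', t)) x) x :=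
      Eventually.of_forall fun t => fun x _ => by rw [hpdeq]; exact hpd x t
    exact (hasDerivAt_integral_of_dominated_loc_of_deriv_le (Metric.ball_mem_nhds 0 one_pos)
      (Eventually.of_forall fun x => (hψtcont x).aestronglyMeasurable) (hψtint 0)
      hmeas hbound hbint hdiff).2
  -- facts about ρ
  have hρ'cont : Continuous (deriv ρ) := hρs.continuous_deriv (by simp)
  have hρ'0 : ∀ y : ℝ, y ∉ Set.Icc (-1:ℝ) 1 → deriv ρ y = 0 := by
    intro y hy
    by_contra h
    exact hy (hρsupp (support_deriv_subset (Function.mem_support.mpr h)))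
  have hρ0 : ∀ y : ℝ, y ∉ Set.Icc (-1:ℝ) 1 → ρ y = 0 := fun y hy =>
    image_eq_zero_of_notMem_tsupport (fun hy' => hy (hρsupp hy'))
  have hρ'int : Integrable (deriv ρ) := aux_integrable hρ'cont (-1) 1 hρ'0
  have hρint : Integrable ρ := aux_integrable hρs.continuous (-1) 1 hρ0
  have hρ'zero : ∫ y, deriv ρ y = 0 :=
    integral_eq_zero_of_hasDerivAt_of_integrable
      (fun y => (hρs.differentiable (by simp) y).hasDerivAt) hρ'int hρint
  have hyρ'int : Integrable (fun y => y * deriv ρ y) :=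
    aux_integrable (continuous_id.mul hρ'cont) (-1) 1
      (fun y hy => by rw [hρ'0 y hy, mul_zero])
  have hyρ' : ∫ y, y * deriv ρ y = -1 := by
    have hg : ∀ y : ℝ, HasDerivAt (fun z => z * ρ z) (ρ y + y * deriv ρ y) y := by
      intro y
      have h1 : HasDerivAt (fun z => z * ρ z) (1 * ρ y + y * deriv ρ y) y :=
        (hasDerivAt_id y).mul ((hρs.differentiable (by simp) y).hasDerivAt)
      rwa [one_mul] at h1
    have hgint : Integrable (fun y => ρ y + y * deriv ρ y) := hρint.add hyρ'int
    have hfint : Integrable (fun z : ℝ => z * ρ z) :=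
      aux_integrable (continuous_id.mul hρs.continuous) (-1) 1
        (fun y hy => by rw [hρ0 y hy, mul_zero])
    have h0 : ∫ y, (ρ y + y * deriv ρ y) = 0 :=
      integral_eq_zero_of_hasDerivAt_of_integrable hg hgint hfint
    rw [integral_add hρint hyρ'int, hρ1] at h0
    linarith
  have hsqcont : Continuous fun y : ℝ => Real.sqrt |deriv ρ y| :=
    Real.continuous_sqrt.comp hρ'cont.abs
  have hsqint : Integrable (fun y : ℝ => Real.sqrt |deriv ρ y|) :=
    aux_integrable hsqcont (-1) 1 (fun y hy => by rw [hρ'0 y hy]; simp)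
  set D0 : ℝ := ∫ t : ℝ, deriv (fun x => ψ (x, t)) 0 with hD0def
  set Sq : ℝ := ∫ y : ℝ, Real.sqrt |deriv ρ y| with hSqdef
  -- the first limit
  have hAint : ∀ ε : ℝ, Continuous fun y => deriv ρ y * ((φ (ε * y) - φ 0) / ε) := fun ε =>
    hρ'cont.mul (((hφcont.comp (continuous_const.mul continuous_id)).sub
      continuous_const).div_const ε)
  have hA : Tendsto (fun ε : ℝ => ∫ y : ℝ, deriv ρ y * ((φ (ε * y) - φ 0) / ε))
      (𝓝[>] (0:ℝ)) (𝓝 (-D0)) := by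
    have hlim : Tendsto (fun ε : ℝ => ∫ y : ℝ, deriv ρ y * ((φ (ε * y) - φ 0) / ε))
        (𝓝[>] (0:ℝ)) (𝓝 (∫ y : ℝ, deriv ρ y * (y * D0))) := by
      refine tendsto_integral_filter_of_dominated_convergence
        (bound := fun y => |deriv ρ y| * (2 * T * ((Lψ:ℝ) * |y|))) ?_ ?_ ?_ ?_
      · exact Eventually.of_forall fun ε => (hAint ε).aestronglyMeasurable
      · refine eventually_mem_nhdsWithin.mono fun ε hε => Eventually.of_forall fun y => ?_
        have hε0 : (0:ℝ) < ε := hε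
        have h1 : |φ (ε * y) - φ 0| ≤ 2 * T * ((Lψ:ℝ) * (ε * |y|)) := by
          have h2 := hφlip (ε * y) 0
          rw [sub_zero, abs_mul, abs_of_pos hε0] at h2
          exact h2
        rw [Real.norm_eq_abs, abs_mul, abs_div, abs_of_pos hε0]
        refine mul_le_mul_of_nonneg_left ?_ (abs_nonneg _)
        rw [div_le_iff₀ hε0]
        calc |φ (ε * y) - φ 0| ≤ 2 * T * ((Lψ:ℝ) * (ε * |y|)) := h1
          _ = 2 * T * ((Lψ:ℝ) * |y|) * ε := by ring
      · refine aux_integrable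
          (hρ'cont.abs.mul (continuous_const.mul (continuous_const.mul continuous_abs)))
          (-1) 1 (fun y hy => by rw [hρ'0 y hy, abs_zero, zero_mul])
      · refine Eventually.of_forall fun y => ?_
        by_cases hy : y = 0
        · subst hy
          have he : (fun ε : ℝ => deriv ρ 0 * ((φ (ε * 0) - φ 0) / ε)) = fun _ => 0 := by
            funext ε; simp
          rw [he]
          simpa using (tendsto_const_nhds : Tendsto (fun _ : ℝ => (0:ℝ)) (𝓝[>] 0) (𝓝 0))
        · have hsl := hasDerivAt_iff_tendsto_slope.mp hφD
          have hty : Tendsto (fun ε : ℝ => ε * y) (𝓝[>] (0:ℝ)) (𝓝[≠] (0:ℝ)) := by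
            rw [tendsto_nhdsWithin_iff]
            constructor
            · have h2 : Tendsto (fun ε : ℝ => ε * y) (𝓝 0) (𝓝 (0 * y)) :=
                (continuous_id.mul continuous_const).tendsto 0
              rw [zero_mul] at h2
              exact h2.mono_left nhdsWithin_le_nhds
            · exact eventually_mem_nhdsWithin.mono fun ε hε =>
                mul_ne_zero (ne_of_gt hε) hy
          have h4 : Tendsto (fun ε : ℝ => deriv ρ y * (y * slope φ 0 (ε * y)))
              (𝓝[>] (0:ℝ)) (𝓝 (deriv ρ y * (y * D0))) :=
            (((hsl.comp hty).const_mul y).const_mul (deriv ρ y))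
          refine Tendsto.congr' ?_ h4
          refine eventually_mem_nhdsWithin.mono fun ε hε => ?_
          have hεne : ε ≠ 0 := ne_of_gt hε
          simp only [Function.comp_apply]
          rw [slope_def_field, sub_zero]
          field_simp
    have hval : ∫ y : ℝ, deriv ρ y * (y * D0) = -D0 := by
      have h5 : (fun y : ℝ => deriv ρ y * (y * D0)) = fun y => (y * deriv ρ y) * D0 := by
        funext y; ring
      rw [h5, integral_mul_const, hyρ']
      ring
    rwa [hval] at hlim
  -- the second limit
  have hB : Tendsto (fun ε : ℝ => ∫ y : ℝ, Real.sqrt |deriv ρ y| * φ (ε * y))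
      (𝓝[>] (0:ℝ)) (𝓝 (Sq * φ 0)) := by
    have hlim : Tendsto (fun ε : ℝ => ∫ y : ℝ, Real.sqrt |deriv ρ y| * φ (ε * y))
        (𝓝[>] (0:ℝ)) (𝓝 (∫ y : ℝ, Real.sqrt |deriv ρ y| * φ 0)) := by
      refine tendsto_integral_filter_of_dominated_convergence
        (bound := fun y => Real.sqrt |deriv ρ y| * (2 * T * Mψ)) ?_ ?_ ?_ ?_
      · exact Eventually.of_forall fun ε =>
          (hsqcont.mul (hφcont.comp (continuous_const.mul continuous_id))).aestronglyMeasurable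
      · refine Eventually.of_forall fun ε => Eventually.of_forall fun y => ?_
        rw [Real.norm_eq_abs, abs_mul, abs_of_nonneg (Real.sqrt_nonneg _)]
        exact mul_le_mul_of_nonneg_left (hφbdd _) (Real.sqrt_nonneg _)
      · exact hsqint.mul_const _
      · refine Eventually.of_forall fun y => ?_
        have h2 : Tendsto (fun ε : ℝ => ε * y) (𝓝[>] (0:ℝ)) (𝓝 0) := by
          have h3 : Tendsto (fun ε : ℝ => ε * y) (𝓝 0) (𝓝 (0 * y)) :=
            (continuous_id.mul continuous_const).tendsto 0
          rw [zero_mul] at h3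
          exact h3.mono_left nhdsWithin_le_nhds
        exact ((hφcont.tendsto 0).comp h2).const_mul _
    rwa [integral_mul_const] at hlim
  -- the third limit
  have hRv0 : ∀ (ε : ℝ) (y : ℝ), y ∉ Set.Icc (-1:ℝ) 1 →
      (R ((ε^2)⁻¹ * deriv ρ y) - G 0) * φ (ε * y) = 0 := by
    intro ε y hy
    rw [hρ'0 y hy, mul_zero, hR0, sub_self, zero_mul]
  have hCcont : ∀ ε : ℝ, Continuous fun y =>
      (R ((ε^2)⁻¹ * deriv ρ y) - G 0) * φ (ε * y) := fun ε =>
    ((hRcont.comp (continuous_const.mul hρ'cont)).sub continuous_const).mul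
      (hφcont.comp (continuous_const.mul continuous_id))
  have hCint : ∀ ε : ℝ, Integrable fun y =>
      (R ((ε^2)⁻¹ * deriv ρ y) - G 0) * φ (ε * y) := fun ε =>
    aux_integrable (hCcont ε) (-1) 1 (hRv0 ε)
  have hCbd : ∀ ε : ℝ, |∫ y : ℝ, (R ((ε^2)⁻¹ * deriv ρ y) - G 0) * φ (ε * y)| ≤
      2 * 1 * ((K + |G 0|) * (2 * T * Mψ)) := by
    intro ε
    refine aux_int_bound (hCint ε) 1 _ zero_le_one ?_ ?_
    · intro y
      rw [abs_mul]
      refine mul_le_mul ?_ (hφbdd _) (abs_nonneg _) (by positivity)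
      have h6 : |R ((ε^2)⁻¹ * deriv ρ y) - G 0| ≤ |R ((ε^2)⁻¹ * deriv ρ y)| + |G 0| := by
        simpa [Real.norm_eq_abs] using norm_sub_le (R ((ε^2)⁻¹ * deriv ρ y)) (G 0)
      exact le_trans h6 (by linarith [hK ((ε^2)⁻¹ * deriv ρ y)])
    · intro y hy
      exact hRv0 ε y (by rw [Set.mem_Icc, ← abs_le]; exact not_le.mpr hy)
  have hC : Tendsto (fun ε : ℝ =>
      ε * ∫ y : ℝ, (R ((ε^2)⁻¹ * deriv ρ y) - G 0) * φ (ε * y))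
      (𝓝[>] (0:ℝ)) (𝓝 0) := by
    apply squeeze_zero_norm'
      (a := fun ε : ℝ => ε * (2 * 1 * ((K + |G 0|) * (2 * T * Mψ))))
    · refine eventually_mem_nhdsWithin.mono fun ε hε => ?_
      have hε0 : (0:ℝ) < ε := hε
      rw [Real.norm_eq_abs, abs_mul, abs_of_pos hε0]
      exact mul_le_mul_of_nonneg_left (hCbd ε) hε0.le
    · have h2 : Tendsto (fun ε : ℝ => ε * (2 * 1 * ((K + |G 0|) * (2 * T * Mψ))))
          (𝓝 (0:ℝ)) (𝓝 (0 * (2 * 1 * ((K + |G 0|) * (2 * T * Mψ))))) :=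
        (continuous_id.mul continuous_const).tendsto 0
      rw [zero_mul] at h2
      exact h2.mono_left nhdsWithin_le_nhds
  -- the key identity for ε > 0
  have hkey : ∀ ε : ℝ, ε ∈ Set.Ioi (0:ℝ) →
      (∫ x : ℝ, ∫ t : ℝ, Finv (η + F ((ε ^ 2)⁻¹ * deriv ρ (x / ε))) * ψ (x, t)) =
      G 0 * (∫ x, φ x) +
        ((∫ y : ℝ, deriv ρ y * ((φ (ε * y) - φ 0) / ε)) +
          2 * η * (∫ y : ℝ, Real.sqrt |deriv ρ y| * φ (ε * y)) +
          ε * ∫ y : ℝ, (R ((ε^2)⁻¹ * deriv ρ y) - G 0) * φ (ε * y)) := by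
    intro ε hε
    have hε0 : (0:ℝ) < ε := hε
    have hεne : ε ≠ 0 := ne_of_gt hε0
    have hε2 : (0:ℝ) < ε^2 := by positivity
    have h1 : (∫ x : ℝ, ∫ t : ℝ, Finv (η + F ((ε ^ 2)⁻¹ * deriv ρ (x / ε))) * ψ (x, t))
        = ∫ x : ℝ, G ((ε ^ 2)⁻¹ * deriv ρ (x / ε)) * φ x := by
      congr 1
      funext x
      simp only [hGdef, hφdef]
      exact integral_const_mul _ _
    have hvcont : Continuous fun x => G ((ε ^ 2)⁻¹ * deriv ρ (x / ε)) :=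
      hGcont.comp (continuous_const.mul (hρ'cont.comp (continuous_id.div_const ε)))
    have hint1 : Integrable fun x => (G ((ε ^ 2)⁻¹ * deriv ρ (x / ε)) - G 0) * φ x :=
      aux_integrable ((hvcont.sub continuous_const).mul hφcont) (-T) T
        (fun x hx => by rw [hφ0 x (aux_not_Icc hx), mul_zero])
    have h2 : ∫ x : ℝ, G ((ε ^ 2)⁻¹ * deriv ρ (x / ε)) * φ x
        = G 0 * (∫ x, φ x) + ∫ x, (G ((ε ^ 2)⁻¹ * deriv ρ (x / ε)) - G 0) * φ x := by
      have e1 : (fun x => G ((ε ^ 2)⁻¹ * deriv ρ (x / ε)) * φ x)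
          = fun x => G 0 * φ x + (G ((ε ^ 2)⁻¹ * deriv ρ (x / ε)) - G 0) * φ x := by
        funext x; ring
      rw [e1, integral_add (hφint.const_mul _) hint1, integral_const_mul]
    have h3 : (∫ x : ℝ, (G ((ε ^ 2)⁻¹ * deriv ρ (x / ε)) - G 0) * φ x)
        = ε * ∫ y : ℝ, (G ((ε ^ 2)⁻¹ * deriv ρ y) - G 0) * φ (ε * y) := by
      have e2 := MeasureTheory.Measure.integral_comp_div
        (g := fun y => (G ((ε ^ 2)⁻¹ * deriv ρ y) - G 0) * φ (ε * y)) ε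
      rw [abs_of_pos hε0, smul_eq_mul] at e2
      rw [← e2]
      congr 1
      funext x
      congr 1
      rw [mul_comm ε (x / ε), div_mul_cancel₀ x hεne]
    have h4 : ∀ y : ℝ, ε * ((G ((ε ^ 2)⁻¹ * deriv ρ y) - G 0) * φ (ε * y))
        = deriv ρ y * ((φ (ε * y) - φ 0) / ε) + deriv ρ y * (φ 0 / ε)
          + 2 * η * (Real.sqrt |deriv ρ y| * φ (ε * y))
          + ε * ((R ((ε ^ 2)⁻¹ * deriv ρ y) - G 0) * φ (ε * y)) := by
      intro y
      have hsqrt : Real.sqrt |(ε ^ 2)⁻¹ * deriv ρ y| = ε⁻¹ * Real.sqrt |deriv ρ y| := by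
        rw [abs_mul, abs_of_pos (inv_pos.2 hε2), Real.sqrt_mul (inv_nonneg.2 hε2.le),
          Real.sqrt_inv, Real.sqrt_sq hε0.le]
      rw [hGsplit ((ε ^ 2)⁻¹ * deriv ρ y), hsqrt]
      field_simp
      ring
    have hintA : Integrable fun y => deriv ρ y * ((φ (ε * y) - φ 0) / ε) :=
      aux_integrable (hAint ε) (-1) 1 (fun y hy => by rw [hρ'0 y hy, zero_mul])
    have hintA' : Integrable fun y => deriv ρ y * (φ 0 / ε) := hρ'int.mul_const _
    have hintB : Integrable fun y => 2 * η * (Real.sqrt |deriv ρ y| * φ (ε * y)) :=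
      (aux_integrable (hsqcont.mul (hφcont.comp (continuous_const.mul continuous_id)))
        (-1) 1 (fun y hy => by simp [hρ'0 y hy])).const_mul _
    have hintC : Integrable fun y => ε * ((R ((ε ^ 2)⁻¹ * deriv ρ y) - G 0) * φ (ε * y)) :=
      (hCint ε).const_mul _
    have h5 : ε * (∫ y : ℝ, (G ((ε ^ 2)⁻¹ * deriv ρ y) - G 0) * φ (ε * y))
        = (∫ y : ℝ, deriv ρ y * ((φ (ε * y) - φ 0) / ε))
          + 2 * η * (∫ y : ℝ, Real.sqrt |deriv ρ y| * φ (ε * y))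
          + ε * ∫ y : ℝ, (R ((ε^2)⁻¹ * deriv ρ y) - G 0) * φ (ε * y) := by
      calc ε * (∫ y : ℝ, (G ((ε ^ 2)⁻¹ * deriv ρ y) - G 0) * φ (ε * y))
          = ∫ y : ℝ, ε * ((G ((ε ^ 2)⁻¹ * deriv ρ y) - G 0) * φ (ε * y)) :=
            (integral_const_mul ε _).symm
        _ = ∫ y : ℝ, (deriv ρ y * ((φ (ε * y) - φ 0) / ε) + deriv ρ y * (φ 0 / ε)
              + 2 * η * (Real.sqrt |deriv ρ y| * φ (ε * y))
              + ε * ((R ((ε ^ 2)⁻¹ * deriv ρ y) - G 0) * φ (ε * y))) := by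
            congr 1
            funext y
            exact h4 y
        _ = (∫ y : ℝ, (deriv ρ y * ((φ (ε * y) - φ 0) / ε) + deriv ρ y * (φ 0 / ε)
              + 2 * η * (Real.sqrt |deriv ρ y| * φ (ε * y))))
              + (∫ y : ℝ, ε * ((R ((ε ^ 2)⁻¹ * deriv ρ y) - G 0) * φ (ε * y))) :=
            integral_add ((hintA.add hintA').add hintB) hintC
        _ = ((∫ y : ℝ, (deriv ρ y * ((φ (ε * y) - φ 0) / ε) + deriv ρ y * (φ 0 / ε)))
              + (∫ y : ℝ, 2 * η * (Real.sqrt |deriv ρ y| * φ (ε * y))))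
              + (∫ y : ℝ, ε * ((R ((ε ^ 2)⁻¹ * deriv ρ y) - G 0) * φ (ε * y))) := by
            congr 1
            exact integral_add (hintA.add hintA') hintB
        _ = (((∫ y : ℝ, deriv ρ y * ((φ (ε * y) - φ 0) / ε))
              + (∫ y : ℝ, deriv ρ y * (φ 0 / ε)))
              + (∫ y : ℝ, 2 * η * (Real.sqrt |deriv ρ y| * φ (ε * y))))
              + (∫ y : ℝ, ε * ((R ((ε ^ 2)⁻¹ * deriv ρ y) - G 0) * φ (ε * y))) := by
            congr 2
            exact integral_add hintA hintA'
        _ = (∫ y : ℝ, deriv ρ y * ((φ (ε * y) - φ 0) / ε))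
              + 2 * η * (∫ y : ℝ, Real.sqrt |deriv ρ y| * φ (ε * y))
              + ε * ∫ y : ℝ, (R ((ε^2)⁻¹ * deriv ρ y) - G 0) * φ (ε * y) := by
            have e2 : (∫ y : ℝ, deriv ρ y * (φ 0 / ε)) = 0 := by
              rw [integral_mul_const, hρ'zero, zero_mul]
            have e3 : (∫ y : ℝ, 2 * η * (Real.sqrt |deriv ρ y| * φ (ε * y)))
                = 2 * η * ∫ y : ℝ, Real.sqrt |deriv ρ y| * φ (ε * y) :=
              integral_const_mul _ _
            have e4 : (∫ y : ℝ, ε * ((R ((ε ^ 2)⁻¹ * deriv ρ y) - G 0) * φ (ε * y)))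
                = ε * ∫ y : ℝ, (R ((ε ^ 2)⁻¹ * deriv ρ y) - G 0) * φ (ε * y) :=
              integral_const_mul _ _
            rw [e2, e3, e4, add_zero]
    rw [h1, h2, h3, h5]
  -- assemble
  have hcomb : Tendsto (fun ε : ℝ =>
      G 0 * (∫ x, φ x) +
        ((∫ y : ℝ, deriv ρ y * ((φ (ε * y) - φ 0) / ε)) +
          2 * η * (∫ y : ℝ, Real.sqrt |deriv ρ y| * φ (ε * y)) +
          ε * ∫ y : ℝ, (R ((ε^2)⁻¹ * deriv ρ y) - G 0) * φ (ε * y)))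
      (𝓝[>] (0:ℝ)) (𝓝 (G 0 * (∫ x, φ x) + (-D0 + 2 * η * (Sq * φ 0) + 0))) :=
    tendsto_const_nhds.add ((hA.add (hB.const_mul (2 * η))).add hC)
  have hfin := hcomb.congr' (eventually_mem_nhdsWithin.mono fun ε hε => (hkey ε hε).symm)
  have hval : G 0 * (∫ x, φ x) + (-D0 + 2 * η * (Sq * φ 0) + 0)
      = Finv (η + F 0) * (∫ x : ℝ, ∫ t : ℝ, ψ (x, t)) + 2 * η * Sq * (∫ t : ℝ, ψ (0, t)) - D0 := by
    have e1 : (∫ x : ℝ, ∫ t : ℝ, ψ (x, t)) = ∫ x, φ x := rfl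
    have e2 : (∫ t : ℝ, ψ (0, t)) = φ 0 := rfl
    rw [e1, e2]
    simp only [hGdef]
    ring
  rwa [hval] at hfin
end

section
/- Let u, v ∈ C^∞(ℝ²) satisfy ∂_t u + u·∂_x u = 0 and ∂_t v + u·∂_x v = 0 on ℝ², and assume |u(x,t)| < 1 for all (x,t) ∈ ℝ². Fix η ∈ ℝ and define ũ(x,t) = −tanh( η − Artanh( u(x·cosh η + t·sinh η, x·sinh η + t·cosh η) ) ) and ṽ(x,t) = v(x·cosh η + t·sinh η, x·sinh η + t·cosh η). Then ∂_t ũ + ũ·∂_x ũ = 0 and ∂_t ṽ + ũ·∂_x ṽ = 0 on ℝ². -/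
open Real

/-- The inverse of `tanh` on `(−1, 1)`. -/
noncomputable def artanh (x : ℝ) : ℝ := Real.log ((1 + x) / (1 - x)) / 2

/-- The two-dimensional Lorentz transformation of the `(x,t)`-plane with parameter `η`. -/
noncomputable def lorentz (η : ℝ) (p : ℝ × ℝ) : ℝ × ℝ :=
  (p.1 * Real.cosh η + p.2 * Real.sinh η, p.1 * Real.sinh η + p.2 * Real.cosh η)

lemma den_pos (η y : ℝ) (hy : |y| < 1) : 0 < Real.cosh η - Real.sinh η * y := by
  have habs : |Real.sinh η| < Real.cosh η := by
    nlinarith [sq_abs (Real.sinh η), abs_nonneg (Real.sinh η), Real.cosh_pos η,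
      Real.cosh_sq_sub_sinh_sq η]
  have h1 : Real.sinh η * y ≤ |Real.sinh η * y| := le_abs_self _
  have h2 : |Real.sinh η * y| ≤ |Real.sinh η| := by
    rw [abs_mul]
    exact mul_le_of_le_one_right (abs_nonneg _) hy.le
  linarith

lemma key_tanh (η y : ℝ) (hy : |y| < 1) :
    -Real.tanh (η - _root_.artanh y) =
      (Real.cosh η * y - Real.sinh η) / (Real.cosh η - Real.sinh η * y) := by
  obtain ⟨hy1, hy2⟩ := abs_lt.1 hy
  have h1 : (0:ℝ) < 1 - y := by linarith
  have h2 : (0:ℝ) < 1 + y := by linarith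
  have hr : (0:ℝ) < (1 + y) / (1 - y) := div_pos h2 h1
  have hE : Real.exp (_root_.artanh y) ^ 2 = (1 + y) / (1 - y) := by
    rw [_root_.artanh, ← Real.exp_nat_mul]
    push_cast
    rw [mul_div_cancel₀ _ (two_ne_zero), Real.exp_log hr]
  set E := Real.exp (_root_.artanh y) with hEdef
  have hEpos : (0:ℝ) < E := Real.exp_pos _
  have hapos : (0:ℝ) < Real.exp η := Real.exp_pos _
  have hE2 : E ^ 2 * (1 - y) = 1 + y := by
    field_simp [ne_of_gt h1] at hE ⊢
    linarith [hE]
  have hneg : Real.exp (-(η - _root_.artanh y)) = E / Real.exp η := by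
    rw [neg_sub, Real.exp_sub]
  rw [Real.tanh_eq_sinh_div_cosh, Real.sinh_eq, Real.cosh_eq, Real.cosh_eq, Real.sinh_eq,
    Real.exp_sub, hneg, Real.exp_neg]
  have hden := den_pos η y hy
  rw [Real.cosh_eq, Real.sinh_eq, Real.exp_neg] at hden
  have hdensum : (0:ℝ) < Real.exp η / E + E / Real.exp η := by positivity
  rw [← hEdef]
  rw [← neg_div, div_eq_div_iff (by positivity) (ne_of_gt hden)]
  field_simp
  ring_nf
  linear_combination (2 * Real.exp η ^ 2) * hE2

/-- **Lorentz-type symmetry of the system `u_t + u u_x = 0`, `v_t + u v_x = 0`.**  If `u, v`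
are smooth solutions on `ℝ²` with `|u| < 1`, then for any `η ∈ ℝ` the transformed functions
`ũ(x,t) = −tanh(η − artanh(u(x cosh η + t sinh η, x sinh η + t cosh η)))` and
`ṽ(x,t) = v(x cosh η + t sinh η, x sinh η + t cosh η)` again solve the system. -/
theorem lorentz_symmetry_of_plastic_system
    (u v : ℝ × ℝ → ℝ) (hu : ContDiff ℝ (⊤ : ℕ∞) u) (hv : ContDiff ℝ (⊤ : ℕ∞) v)
    (hub : ∀ p : ℝ × ℝ, |u p| < 1)
    (hueq : ∀ p : ℝ × ℝ, fderiv ℝ u p (0, 1) + u p * fderiv ℝ u p (1, 0) = 0)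
    (hveq : ∀ p : ℝ × ℝ, fderiv ℝ v p (0, 1) + u p * fderiv ℝ v p (1, 0) = 0)
    (η : ℝ) :
    let ut : ℝ × ℝ → ℝ := fun p => -Real.tanh (η - _root_.artanh (u (lorentz η p)))
    let vt : ℝ × ℝ → ℝ := fun p => v (lorentz η p)
    (∀ p : ℝ × ℝ, fderiv ℝ ut p (0, 1) + ut p * fderiv ℝ ut p (1, 0) = 0) ∧
    (∀ p : ℝ × ℝ, fderiv ℝ vt p (0, 1) + ut p * fderiv ℝ vt p (1, 0) = 0) := by
  
  intro ut vt
  set c := Real.cosh η with hc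
  set s := Real.sinh η with hs
  -- the Lorentz map as a continuous linear map
  set L : (ℝ × ℝ) →L[ℝ] (ℝ × ℝ) :=
    ((c • ContinuousLinearMap.fst ℝ ℝ ℝ + s • ContinuousLinearMap.snd ℝ ℝ ℝ).prod
      (s • ContinuousLinearMap.fst ℝ ℝ ℝ + c • ContinuousLinearMap.snd ℝ ℝ ℝ)) with hLdef
  have hLeq : ∀ w : ℝ × ℝ, L w = lorentz η w := by
    intro w
    simp [hLdef, lorentz, ContinuousLinearMap.prod_apply, Prod.ext_iff]
    constructor <;> ring
  have hL : ∀ p : ℝ × ℝ, HasFDerivAt (lorentz η) L p := by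
    intro p
    have h0 : HasFDerivAt (fun w => L w) L p := L.hasFDerivAt
    have : (fun w => L w) = lorentz η := funext hLeq
    rwa [this] at h0
  have hlin : ∀ (f' : (ℝ × ℝ) →L[ℝ] ℝ) (a b : ℝ), f' (a, b) = a * f' (1, 0) + b * f' (0, 1) := by
    intro f' a b
    have hab : ((a, b) : ℝ × ℝ) = a • ((1:ℝ), (0:ℝ)) + b • ((0:ℝ), (1:ℝ)) := by
      simp [Prod.ext_iff]
    rw [hab, map_add, map_smul, map_smul, smul_eq_mul, smul_eq_mul]
  have hL01 : L (0, 1) = (s, c) := by rw [hLeq]; simp [lorentz, hc, hs]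
  have hL10 : L (1, 0) = (c, s) := by rw [hLeq]; simp [lorentz, hc, hs]
  constructor
  · intro p
    set q := lorentz η p with hq
    set U := u q with hUdef
    have hden : (0:ℝ) < c - s * U := den_pos η U (hub q)
    -- derivative of u ∘ lorentz
    have hU : HasFDerivAt (fun p => u (lorentz η p)) ((fderiv ℝ u q).comp L) p :=
      ((hu.differentiable (by simp) q).hasFDerivAt).comp p (hL p)
    -- derivative of the outer rational function
    have hg : HasDerivAt (fun y => (c * y - s) / (c - s * y)) (1 / (c - s * U) ^ 2) U := by
      have h1 : HasDerivAt (fun y => c * y - s) c U := by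
        simpa using ((hasDerivAt_id U).const_mul c).sub_const s
      have h2 : HasDerivAt (fun y => c - s * y) (-s) U := by
        simpa using ((hasDerivAt_id U).const_mul s).const_sub c
      have h3 := h1.fun_div h2 (ne_of_gt hden)
      refine h3.congr_deriv ?_
      have hcs : c ^ 2 - s ^ 2 = 1 := Real.cosh_sq_sub_sinh_sq η
      congr 1
      linear_combination (1 : ℝ) * hcs
    have hfun : ut = (fun y => (c * y - s) / (c - s * y)) ∘ (fun p => u (lorentz η p)) := by
      funext w
      exact key_tanh η (u (lorentz η w)) (hub _)
    have hut : HasFDerivAt ut ((1 / (c - s * U) ^ 2) • ((fderiv ℝ u q).comp L)) p := by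
      rw [hfun]
      exact hg.comp_hasFDerivAt p hU
    rw [hut.fderiv]
    have hval : ut p = (c * U - s) / (c - s * U) := key_tanh η U (hub q)
    set X := fderiv ℝ u q (1, 0) with hX
    have hT : fderiv ℝ u q (0, 1) = -(U * X) := by linarith [hueq q]
    simp only [ContinuousLinearMap.smul_apply, ContinuousLinearMap.comp_apply, hL01, hL10,
      smul_eq_mul, hval]
    rw [hlin (fderiv ℝ u q) s c, hlin (fderiv ℝ u q) c s, hT, ← hX]
    field_simp
    ring
  · intro p
    set q := lorentz η p with hq
    set U := u q with hUdef
    have hden : (0:ℝ) < c - s * U := den_pos η U (hub q)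
    have hvt : HasFDerivAt vt ((fderiv ℝ v q).comp L) p :=
      ((hv.differentiable (by simp) q).hasFDerivAt).comp p (hL p)
    rw [hvt.fderiv]
    have hval : ut p = (c * U - s) / (c - s * U) := key_tanh η U (hub q)
    set Xv := fderiv ℝ v q (1, 0) with hXv
    have hTv : fderiv ℝ v q (0, 1) = -(U * Xv) := by linarith [hveq q]
    simp only [ContinuousLinearMap.comp_apply, hL01, hL10, hval]
    rw [hlin (fderiv ℝ v q) s c, hlin (fderiv ℝ v q) c s, hTv, ← hXv]
    field_simp
    ring
end

section
/- Let n ∈ ℕ, λ ∈ ℝⁿ, and let u ∈ C^∞(ℝⁿ × ℝ) (variables (x,t)) satisfy ∂_t u + λ·∇_x u = tanh(u). For c ∈ ℝ define ũ(x,t) = Arsinh( e^{c}·sinh( u(x,t) ) ). Then ∂_t ũ + λ·∇_x ũ = tanh(ũ) on ℝⁿ × ℝ. -/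
open Real

/-- **Symmetry of the nonlinear transport equation `u_t + λ·∇ₓu = tanh u` generated by
`tanh(u)∂_u`.**  If `u` is a smooth solution on `ℝⁿ × ℝ`, then for every `c ∈ ℝ` the
function `ũ(x,t) = arsinh(e^c · sinh(u(x,t)))` is again a solution.  (The directional
derivative `fderiv ℝ u p (λ, 1)` is exactly `∂_t u + λ·∇ₓ u` at `p`.) -/
theorem tanh_transport_symmetry {n : ℕ} (l : EuclideanSpace ℝ (Fin n))
    (u : EuclideanSpace ℝ (Fin n) × ℝ → ℝ) (hu : ContDiff ℝ (⊤ : ℕ∞) u)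
    (heq : ∀ p : EuclideanSpace ℝ (Fin n) × ℝ,
      fderiv ℝ u p (l, 1) = Real.tanh (u p)) (c : ℝ) :
    ∀ p : EuclideanSpace ℝ (Fin n) × ℝ,
      fderiv ℝ (fun q => Real.arsinh (Real.exp c * Real.sinh (u q))) p (l, 1) =
        Real.tanh (Real.arsinh (Real.exp c * Real.sinh (u p))) := by
  intro p
  set y : ℝ := Real.exp c * Real.sinh (u p) with hy
  have hdu : HasFDerivAt u (fderiv ℝ u p) p :=
    ((hu.differentiable (by simp)) p).hasFDerivAt
  have hsinh : HasDerivAt (fun z : ℝ => Real.exp c * Real.sinh z)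
      (Real.exp c * Real.cosh (u p)) (u p) :=
    (Real.hasDerivAt_sinh (u p)).const_mul (Real.exp c)
  have harsinh : HasDerivAt Real.arsinh ((Real.sqrt (1 + y ^ 2))⁻¹) y :=
    Real.hasDerivAt_arsinh y
  have hcomp : HasDerivAt (fun z : ℝ => Real.arsinh (Real.exp c * Real.sinh z))
      ((Real.sqrt (1 + y ^ 2))⁻¹ * (Real.exp c * Real.cosh (u p))) (u p) :=
    by have h := harsinh.comp (u p) hsinh; exact h
  have hF : HasFDerivAt (fun q => Real.arsinh (Real.exp c * Real.sinh (u q)))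
      (((Real.sqrt (1 + y ^ 2))⁻¹ * (Real.exp c * Real.cosh (u p))) • fderiv ℝ u p) p :=
    hcomp.comp_hasFDerivAt p hdu
  rw [hF.fderiv]
  simp only [ContinuousLinearMap.smul_apply, smul_eq_mul, heq p]
  simp only [Real.tanh_eq_sinh_div_cosh]
  rw [Real.sinh_arsinh, Real.cosh_arsinh]
  have hc : Real.cosh (u p) ≠ 0 := ne_of_gt (Real.cosh_pos (u p))
  field_simp [hy]
  ring
end

section
/- Let F : ℝ → ℝ be a smooth surjective function with F′(y) > 0 for all y (so F is a diffeomorphism of ℝ with inverse F^{−1}), and let u ∈ C^∞(ℝ²) satisfy ∂_t u + F(u)·∂_x u = 0 on ℝ². Fix η ∈ ℝ and define, on Ω_η = {(x,t) ∈ ℝ² : 1 + ηt > 0}, the function w(x,t) = F^{−1}( ( ηx + F( u( x/(1+ηt), t/(1+ηt) ) ) ) / (1+ηt) ). Then ∂_t w + F(w)·∂_x w = 0 on Ω_η. -/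
set_option maxHeartbeats 2000000

lemma clm_eval_pair (L : ℝ × ℝ →L[ℝ] ℝ) (a b : ℝ) :
    L (a, b) = a * L (1, 0) + b * L (0, 1) := by
  have h : (a, b) = a • ((1 : ℝ), (0 : ℝ)) + b • ((0 : ℝ), (1 : ℝ)) := by
    simp [Prod.ext_iff]
  rw [h, map_add, map_smul, map_smul, smul_eq_mul, smul_eq_mul]

/-- **Projective symmetry of the scalar conservation law `u_t + F(u)u_x = 0`.**  Let `F` be
a smooth increasing diffeomorphism of `ℝ` with inverse `Finv` and let `u` be a smooth
solution on `ℝ²`.  Then for every `η`, the function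
`w(x,t) = F⁻¹((ηx + F(u(x/(1+ηt), t/(1+ηt))))/(1+ηt))` solves `w_t + F(w)w_x = 0` on
`Ω_η = {(x,t) : 1 + ηt > 0}`. -/
theorem projective_symmetry_conservation_law
    (F Finv : ℝ → ℝ) (hF : ContDiff ℝ (⊤ : ℕ∞) F) (hF' : ∀ y : ℝ, 0 < deriv F y)
    (hFsurj : Function.Surjective F)
    (hinv₁ : Function.LeftInverse Finv F) (hinv₂ : Function.RightInverse Finv F)
    (u : ℝ × ℝ → ℝ) (hu : ContDiff ℝ (⊤ : ℕ∞) u)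
    (hueq : ∀ p : ℝ × ℝ, fderiv ℝ u p (0, 1) + F (u p) * fderiv ℝ u p (1, 0) = 0)
    (η : ℝ) :
    let w : ℝ × ℝ → ℝ := fun p =>
      Finv ((η * p.1 + F (u (p.1 / (1 + η * p.2), p.2 / (1 + η * p.2)))) / (1 + η * p.2))
    ∀ p : ℝ × ℝ, 0 < 1 + η * p.2 →
      fderiv ℝ w p (0, 1) + F (w p) * fderiv ℝ w p (1, 0) = 0 := by
  intro w p hp
  -- basic facts about F and Finv
  have hFderiv : ∀ y, HasDerivAt F (deriv F y) y := fun y =>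
    ((hF.differentiable (by simp)) y).hasDerivAt
  have hFmono : StrictMono F := strictMono_of_deriv_pos hF'
  have hFinvMono : Monotone Finv := by
    intro a b hab
    rcases hFsurj a with ⟨a', rfl⟩
    rcases hFsurj b with ⟨b', rfl⟩
    rw [hinv₁, hinv₁]
    exact (hFmono.le_iff_le).mp hab
  have hFinvSurj : Function.Surjective Finv := fun y => ⟨F y, hinv₁ y⟩
  have hFinvCont : Continuous Finv := hFinvMono.continuous_of_surjective hFinvSurj
  have hFinvDeriv : ∀ a : ℝ, HasDerivAt Finv (deriv F (Finv a))⁻¹ a := fun a =>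
    HasDerivAt.of_local_left_inverse hFinvCont.continuousAt
      (hFderiv (Finv a)) (ne_of_gt (hF' _)) (Filter.Eventually.of_forall hinv₂)
  -- notation
  set s : ℝ := 1 + η * p.2 with hsdef
  have hs : s ≠ 0 := ne_of_gt hp
  set q : ℝ × ℝ := (p.1 / s, p.2 / s) with hqdef
  -- derivative of the denominator z ↦ 1 + η z.2
  have hd : HasFDerivAt (fun z : ℝ × ℝ => 1 + η * z.2)
      (η • ContinuousLinearMap.snd ℝ ℝ ℝ) p :=
    ((hasFDerivAt_snd (𝕜 := ℝ) (E := ℝ) (F := ℝ) (p := p)).const_mul η).const_add 1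
  -- derivative of z ↦ (1 + η z.2)⁻¹
  have hi : HasFDerivAt (fun z : ℝ × ℝ => (1 + η * z.2)⁻¹)
      ((-(s ^ 2)⁻¹) • (η • ContinuousLinearMap.snd ℝ ℝ ℝ)) p :=
    (hasDerivAt_inv hs).comp_hasFDerivAt p hd
  -- derivative of φ : z ↦ (z.1/(1+ηz.2), z.2/(1+ηz.2))
  have hφ1 : HasFDerivAt (fun z : ℝ × ℝ => z.1 / (1 + η * z.2))
      ((p.1 • ((-(s ^ 2)⁻¹) • (η • ContinuousLinearMap.snd ℝ ℝ ℝ))) +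
        (s⁻¹ • ContinuousLinearMap.fst ℝ ℝ ℝ)) p := by
    have := (hasFDerivAt_fst (𝕜 := ℝ) (E := ℝ) (F := ℝ) (p := p)).mul hi
    simpa [div_eq_mul_inv, Pi.mul_def, hsdef] using this
  have hφ2 : HasFDerivAt (fun z : ℝ × ℝ => z.2 / (1 + η * z.2))
      ((p.2 • ((-(s ^ 2)⁻¹) • (η • ContinuousLinearMap.snd ℝ ℝ ℝ))) +
        (s⁻¹ • ContinuousLinearMap.snd ℝ ℝ ℝ)) p := by
    have := (hasFDerivAt_snd (𝕜 := ℝ) (E := ℝ) (F := ℝ) (p := p)).mul hi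
    simpa [div_eq_mul_inv, Pi.mul_def, hsdef] using this
  have hφ : HasFDerivAt (fun z : ℝ × ℝ =>
      (z.1 / (1 + η * z.2), z.2 / (1 + η * z.2)))
      (((p.1 • ((-(s ^ 2)⁻¹) • (η • ContinuousLinearMap.snd ℝ ℝ ℝ))) +
        (s⁻¹ • ContinuousLinearMap.fst ℝ ℝ ℝ)).prod
       ((p.2 • ((-(s ^ 2)⁻¹) • (η • ContinuousLinearMap.snd ℝ ℝ ℝ))) +
        (s⁻¹ • ContinuousLinearMap.snd ℝ ℝ ℝ))) p := hφ1.prodMk hφ2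
  -- derivative of u ∘ φ, then F ∘ u ∘ φ
  set U : ℝ × ℝ →L[ℝ] ℝ := fderiv ℝ u q with hUdef
  have hU : HasFDerivAt u U q := ((hu.differentiable (by simp)) q).hasFDerivAt
  set Dφ := (((p.1 • ((-(s ^ 2)⁻¹) • (η • ContinuousLinearMap.snd ℝ ℝ ℝ))) +
        (s⁻¹ • ContinuousLinearMap.fst ℝ ℝ ℝ)).prod
       ((p.2 • ((-(s ^ 2)⁻¹) • (η • ContinuousLinearMap.snd ℝ ℝ ℝ))) +
        (s⁻¹ • ContinuousLinearMap.snd ℝ ℝ ℝ))) with hDφdef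
  have huφ : HasFDerivAt (fun z : ℝ × ℝ =>
      u (z.1 / (1 + η * z.2), z.2 / (1 + η * z.2))) (U.comp Dφ) p := by
    have := hU.comp p hφ
    simpa [Function.comp_def] using this
  have hFuφ : HasFDerivAt (fun z : ℝ × ℝ =>
      F (u (z.1 / (1 + η * z.2), z.2 / (1 + η * z.2))))
      ((deriv F (u q)) • (U.comp Dφ)) p := by
    have := (hFderiv (u q)).comp_hasFDerivAt p huφ
    simpa [Function.comp_def] using this
  -- numerator
  have hN : HasFDerivAt (fun z : ℝ × ℝ =>
      η * z.1 + F (u (z.1 / (1 + η * z.2), z.2 / (1 + η * z.2))))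
      ((η • ContinuousLinearMap.fst ℝ ℝ ℝ) + (deriv F (u q)) • (U.comp Dφ)) p :=
    ((hasFDerivAt_fst (𝕜 := ℝ) (E := ℝ) (F := ℝ) (p := p)).const_mul η).add hFuφ
  -- inner function g = numerator / denominator
  set Nval : ℝ := η * p.1 + F (u q) with hNval
  set DN := (η • ContinuousLinearMap.fst ℝ ℝ ℝ) + (deriv F (u q)) • (U.comp Dφ) with hDN
  have hg : HasFDerivAt (fun z : ℝ × ℝ =>
      (η * z.1 + F (u (z.1 / (1 + η * z.2), z.2 / (1 + η * z.2)))) / (1 + η * z.2))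
      ((Nval • ((-(s ^ 2)⁻¹) • (η • ContinuousLinearMap.snd ℝ ℝ ℝ))) + (s⁻¹ • DN)) p := by
    have := hN.mul hi
    simpa [div_eq_mul_inv, Pi.mul_def, hNval, hqdef, hsdef] using this
  set Dg := (Nval • ((-(s ^ 2)⁻¹) • (η • ContinuousLinearMap.snd ℝ ℝ ℝ))) + (s⁻¹ • DN)
    with hDg
  set gval : ℝ := Nval / s with hgval
  -- w = Finv ∘ g
  have hW : HasFDerivAt w ((deriv F (Finv gval))⁻¹ • Dg) p := by
    have h1 := (hFinvDeriv gval).comp_hasFDerivAt p hg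
    simpa [Function.comp_def, w, hgval, hNval, hqdef, hsdef] using h1
  have hfd : fderiv ℝ w p = (deriv F (Finv gval))⁻¹ • Dg := hW.fderiv
  have hFw : F (w p) = gval := by
    have : w p = Finv gval := by simp [w, hgval, hNval, hqdef, hsdef]
    rw [this, hinv₂]
  rw [hfd, hFw]
  -- now pure computation
  set ux : ℝ := U (1, 0) with hux
  set ut : ℝ := U (0, 1) with hut
  have hpde : ut + F (u q) * ux = 0 := hueq q
  have hUeval : ∀ a b : ℝ, U (a, b) = a * ux + b * ut := fun a b => clm_eval_pair U a b
  have hc : (0 : ℝ) < deriv F (Finv gval) := hF' _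
  simp only [ContinuousLinearMap.smul_apply, ContinuousLinearMap.add_apply,
    ContinuousLinearMap.comp_apply, hDg, hDN, hDφdef, ContinuousLinearMap.prod_apply,
    ContinuousLinearMap.coe_fst', ContinuousLinearMap.coe_snd', smul_eq_mul]
  rw [hUeval, hUeval]
  have hq1 : q.1 = p.1 / s := by rw [hqdef]
  have hq2 : q.2 = p.2 / s := by rw [hqdef]
  have hut' : ut = -(F (u q) * ux) := by linarith
  rw [hut']
  rw [hgval, hNval]
  field_simp
  ring
end

section
/- For η > 0, y ∈ ℝ and ε > 0 set s_ε(y) = ε·Arsinh( e^{η/ε}·sinh(y/ε) ). Then |s_ε(y)| ≤ |y| + η for all ε > 0 and y ∈ ℝ, and for every y ≠ 0 one has lim_{ε→0⁺} s_ε(y) = y + η·sgn(y). -/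
/-!
With `a = η/ε` and `t = y/ε`, the difference `sinh (t + a) - eᵃ sinh t = sinh a · e⁻ᵗ` is
nonnegative, so `s_ε(y) ≤ y + η`; since `s_ε` is odd this gives `|s_ε(y) - y| ≤ η`.
For `y > 0`, the bound `arsinh x ≥ log (2x)` and the identity `2 eᵃ sinh t = eᵗ⁺ᵃ (1 - e⁻²ᵗ)`
give `s_ε(y) ≥ y + η + ε log (1 - e^{-2y/ε})`, and the correction term tends to `0` as `ε → 0⁺`.
-/

open Topology Filter Real

namespace Real

lemma exp_mul_sinh_le_sinh_add {a : ℝ} (ha : 0 ≤ a) (t : ℝ) : exp a * sinh t ≤ sinh (t + a) := by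
  have hdiff : sinh (t + a) - exp a * sinh t = sinh a * exp (-t) := by
    rw [sinh_add, ← cosh_add_sinh a, ← cosh_sub_sinh t]; ring
  have : 0 ≤ sinh a * exp (-t) := mul_nonneg (sinh_nonneg_iff.2 ha) (exp_pos _).le
  linarith

lemma log_two_mul_le_arsinh {x : ℝ} (hx : 0 < x) : log (2 * x) ≤ arsinh x := by
  have : x ≤ √(1 + x ^ 2) := le_sqrt_of_sq_le (by linarith)
  exact log_le_log (by positivity) (by linarith)

lemma two_mul_exp_mul_sinh (a t : ℝ) :
    2 * (exp a * sinh t) = exp (t + a) * (1 - exp (-(2 * t))) := by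
  rw [sinh_eq, show -(2 * t) = -t - t by ring, exp_add, exp_sub]
  field_simp

lemma add_add_log_one_sub_exp_le_arsinh (a : ℝ) {t : ℝ} (ht : 0 < t) :
    t + a + log (1 - exp (-(2 * t))) ≤ arsinh (exp a * sinh t) := by
  have hpos : 0 < 1 - exp (-(2 * t)) := sub_pos.2 (exp_lt_one_iff.2 (by linarith))
  have hx : 0 < exp a * sinh t := mul_pos (exp_pos a) (sinh_pos_iff.2 ht)
  calc t + a + log (1 - exp (-(2 * t)))
      = log (2 * (exp a * sinh t)) := by
        rw [two_mul_exp_mul_sinh, log_mul (exp_ne_zero _) hpos.ne', log_exp]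
    _ ≤ arsinh (exp a * sinh t) := log_two_mul_le_arsinh hx

end Real

noncomputable def hyperbolicShift (η ε y : ℝ) : ℝ := ε * arsinh (exp (η / ε) * sinh (y / ε))

section hyperbolicShift

variable {η ε y : ℝ}

lemma hyperbolicShift_neg (η ε y : ℝ) : hyperbolicShift η ε (-y) = -hyperbolicShift η ε y := by
  rw [hyperbolicShift, hyperbolicShift, neg_div, sinh_neg, mul_neg, arsinh_neg, mul_neg]

lemma hyperbolicShift_le_add (hη : 0 ≤ η) (hε : 0 < ε) (y : ℝ) : hyperbolicShift η ε y ≤ y + η := by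
  have h := arsinh_le_arsinh.2 (exp_mul_sinh_le_sinh_add (div_nonneg hη hε.le) (y / ε))
  rw [arsinh_sinh, ← add_div] at h
  calc hyperbolicShift η ε y ≤ ε * ((y + η) / ε) := mul_le_mul_of_nonneg_left h hε.le
    _ = y + η := mul_div_cancel₀ _ hε.ne'

lemma abs_hyperbolicShift_sub_le (hη : 0 ≤ η) (hε : 0 < ε) (y : ℝ) :
    |hyperbolicShift η ε y - y| ≤ η := by
  have hup := hyperbolicShift_le_add hη hε y
  have hlow := hyperbolicShift_le_add hη hε (-y)
  rw [hyperbolicShift_neg] at hlow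
  exact abs_sub_le_iff.2 ⟨by linarith, by linarith⟩

lemma abs_hyperbolicShift_le (hη : 0 ≤ η) (hε : 0 < ε) (y : ℝ) :
    |hyperbolicShift η ε y| ≤ |y| + η := by
  linarith [abs_sub_abs_le_abs_sub (hyperbolicShift η ε y) y, abs_hyperbolicShift_sub_le hη hε y]

lemma add_add_mul_log_one_sub_exp_le_hyperbolicShift (η : ℝ) (hε : 0 < ε) (hy : 0 < y) :
    y + η + ε * log (1 - exp (-(2 * (y / ε)))) ≤ hyperbolicShift η ε y := by
  have h := mul_le_mul_of_nonneg_left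
    (add_add_log_one_sub_exp_le_arsinh (η / ε) (div_pos hy hε)) hε.le
  calc y + η + ε * log (1 - exp (-(2 * (y / ε))))
      = ε * (y / ε + η / ε + log (1 - exp (-(2 * (y / ε))))) := by field_simp
    _ ≤ hyperbolicShift η ε y := h

lemma tendsto_mul_log_one_sub_exp_neg_div (hy : 0 < y) :
    Tendsto (fun ε => ε * log (1 - exp (-(2 * (y / ε))))) (𝓝[>] 0) (𝓝 0) := by
  have hdiv : Tendsto (fun ε => y / ε) (𝓝[>] 0) atTop := by
    simpa only [div_eq_mul_inv] using tendsto_inv_nhdsGT_zero.const_mul_atTop hy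
  have hexp : Tendsto (fun ε => exp (-(2 * (y / ε)))) (𝓝[>] 0) (𝓝 0) :=
    tendsto_exp_neg_atTop_nhds_zero.comp (hdiv.const_mul_atTop two_pos)
  have hsub : Tendsto (fun ε => 1 - exp (-(2 * (y / ε)))) (𝓝[>] 0) (𝓝 1) := by
    simpa using tendsto_const_nhds.sub hexp
  have hlog : Tendsto (fun ε => log (1 - exp (-(2 * (y / ε))))) (𝓝[>] 0) (𝓝 0) := by
    simpa [Function.comp_def] using (continuousAt_log one_ne_zero).tendsto.comp hsub
  simpa using (tendsto_nhdsWithin_of_tendsto_nhds tendsto_id).mul hlog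

lemma tendsto_hyperbolicShift_of_pos (hη : 0 ≤ η) (hy : 0 < y) :
    Tendsto (fun ε => hyperbolicShift η ε y) (𝓝[>] 0) (𝓝 (y + η)) := by
  have hlow : Tendsto (fun ε => y + η + ε * log (1 - exp (-(2 * (y / ε))))) (𝓝[>] 0)
      (𝓝 (y + η)) := by
    simpa using tendsto_const_nhds.add (tendsto_mul_log_one_sub_exp_neg_div hy)
  refine tendsto_of_tendsto_of_tendsto_of_le_of_le' hlow tendsto_const_nhds ?_ ?_ <;>
    filter_upwards [self_mem_nhdsWithin] with ε hε
  · exact add_add_mul_log_one_sub_exp_le_hyperbolicShift η hε hy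
  · exact hyperbolicShift_le_add hη hε y

lemma tendsto_hyperbolicShift (hη : 0 ≤ η) (hy : y ≠ 0) :
    Tendsto (fun ε => hyperbolicShift η ε y) (𝓝[>] 0) (𝓝 (y + η * sign y)) := by
  rcases hy.lt_or_gt with hneg | hpos
  · have h := (tendsto_hyperbolicShift_of_pos hη (neg_pos.2 hneg)).neg
    simp only [← hyperbolicShift_neg, neg_neg] at h
    convert h using 2
    rw [sign_of_neg hneg]; ring
  · rw [sign_of_pos hpos, mul_one]
    exact tendsto_hyperbolicShift_of_pos hη hpos

end hyperbolicShift

/-- **Pointwise limit of the generalized hyperbolic shift.**  For `η > 0` set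
`s_ε(y) = ε·arsinh(e^{η/ε}·sinh(y/ε))`.  Then `|s_ε(y)| ≤ |y| + η` for all `ε > 0` and all
`y`, and `s_ε(y) → y + η·sgn(y)` as `ε → 0⁺` for every `y ≠ 0`. -/
theorem hyperbolic_shift_pointwise_limit (η : ℝ) (hη : 0 < η) :
    (∀ ε : ℝ, 0 < ε → ∀ y : ℝ,
      |ε * Real.arsinh (Real.exp (η / ε) * Real.sinh (y / ε))| ≤ |y| + η) ∧
    ∀ y : ℝ, y ≠ 0 →
      Tendsto (fun ε : ℝ => ε * Real.arsinh (Real.exp (η / ε) * Real.sinh (y / ε)))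
        (𝓝[>] 0) (𝓝 (y + η * Real.sign y)) :=
  ⟨fun _ hε y => abs_hyperbolicShift_le hη.le hε y,
    fun _ hy => tendsto_hyperbolicShift hη.le hy⟩
end

section
/- Let U, P ∈ C^∞(ℝ²) satisfy the one-dimensional linear acoustics system ∂_t P + ∂_x U = 0 and ∂_t U + ∂_x P = 0 on ℝ². Let F, G : ℝ → ℝ be smooth surjective functions with F′ > 0 and G′ > 0 everywhere (diffeomorphisms of ℝ), and let η, θ ∈ ℝ. Define Ũ = F^{−1}( η + F((P+U)/2) ) − G^{−1}( θ + G((P−U)/2) ) and P̃ = F^{−1}( η + F((P+U)/2) ) + G^{−1}( θ + G((P−U)/2) ). Then ∂_t P̃ + ∂_x Ũ = 0 and ∂_t Ũ + ∂_x P̃ = 0 on ℝ². -/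
lemma aux_hasFDerivAt
    (F Finv : ℝ → ℝ) (hF : ContDiff ℝ (⊤ : ℕ∞) F) (hF' : ∀ y : ℝ, 0 < deriv F y)
    (hFsurj : Function.Surjective F) (hFinv₂ : Function.RightInverse Finv F)
    (η : ℝ) (v : ℝ × ℝ → ℝ) (p : ℝ × ℝ) (v' : ℝ × ℝ →L[ℝ] ℝ)
    (hv : HasFDerivAt v v' p) :
    HasFDerivAt (fun q => Finv (η + F (v q)))
      (((deriv F (Finv (η + F (v p))))⁻¹ * deriv F (v p)) • v') p := by
  have hmono : StrictMono F := strictMono_of_deriv_pos hF'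
  -- Finv is continuous
  have hcont : Continuous Finv := by
    let e : ℝ ≃o ℝ := StrictMono.orderIsoOfSurjective F hmono hFsurj
    have heq : Finv = fun y => e.symm y := by
      funext y
      apply hmono.injective
      have h1 : F (Finv y) = y := hFinv₂ y
      have h2 : F (e.symm y) = y := e.apply_symm_apply y
      rw [h1, h2]
    rw [heq]
    exact (e.symm : ℝ ≃o ℝ).continuous
  set a : ℝ := η + F (v p) with ha
  have hFd : HasDerivAt F (deriv F (Finv a)) (Finv a) :=
    (hF.differentiable (by simp) (Finv a)).hasDerivAt
  have hinv : HasDerivAt Finv (deriv F (Finv a))⁻¹ a :=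
    HasDerivAt.of_local_left_inverse hcont.continuousAt hFd (ne_of_gt (hF' _))
      (Filter.Eventually.of_forall hFinv₂)
  have hFd2 : HasDerivAt F (deriv F (v p)) (v p) :=
    (hF.differentiable (by simp) (v p)).hasDerivAt
  have hshift : HasDerivAt (fun y => η + F y) (deriv F (v p)) (v p) :=
    hFd2.const_add η
  have hg : HasDerivAt (fun y => Finv (η + F y))
      ((deriv F (Finv a))⁻¹ * deriv F (v p)) (v p) :=
    HasDerivAt.comp (v p) hinv hshift
  exact hg.comp_hasFDerivAt p hv

/-- **Nonlinear symmetries of one-dimensional linear acoustics.**  Let `U, P` be smooth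
solutions of `P_t + U_x = 0`, `U_t + P_x = 0` on `ℝ²` (variables `(x,t)`), let `F, G` be
smooth increasing diffeomorphisms of `ℝ` with inverses `Finv, Ginv`, and `η, θ ∈ ℝ`.  Then
`Ũ = F⁻¹(η + F((P+U)/2)) − G⁻¹(θ + G((P−U)/2))` and
`P̃ = F⁻¹(η + F((P+U)/2)) + G⁻¹(θ + G((P−U)/2))` again solve the acoustics system. -/
theorem acoustics_nonlinear_symmetry
    (U P : ℝ × ℝ → ℝ) (hU : ContDiff ℝ (⊤ : ℕ∞) U) (hP : ContDiff ℝ (⊤ : ℕ∞) P)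
    (h₁ : ∀ p : ℝ × ℝ, fderiv ℝ P p (0, 1) + fderiv ℝ U p (1, 0) = 0)
    (h₂ : ∀ p : ℝ × ℝ, fderiv ℝ U p (0, 1) + fderiv ℝ P p (1, 0) = 0)
    (F G Finv Ginv : ℝ → ℝ) (hF : ContDiff ℝ (⊤ : ℕ∞) F) (hG : ContDiff ℝ (⊤ : ℕ∞) G)
    (hF' : ∀ y : ℝ, 0 < deriv F y) (hG' : ∀ y : ℝ, 0 < deriv G y)
    (hFsurj : Function.Surjective F) (hGsurj : Function.Surjective G)
    (hFinv₁ : Function.LeftInverse Finv F) (hFinv₂ : Function.RightInverse Finv F)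
    (hGinv₁ : Function.LeftInverse Ginv G) (hGinv₂ : Function.RightInverse Ginv G)
    (η θ : ℝ) :
    let Ut : ℝ × ℝ → ℝ := fun p =>
      Finv (η + F ((P p + U p) / 2)) - Ginv (θ + G ((P p - U p) / 2))
    let Pt : ℝ × ℝ → ℝ := fun p =>
      Finv (η + F ((P p + U p) / 2)) + Ginv (θ + G ((P p - U p) / 2))
    (∀ p : ℝ × ℝ, fderiv ℝ Pt p (0, 1) + fderiv ℝ Ut p (1, 0) = 0) ∧
    (∀ p : ℝ × ℝ, fderiv ℝ Ut p (0, 1) + fderiv ℝ Pt p (1, 0) = 0) := by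
  intro Ut Pt
  have key : ∀ p : ℝ × ℝ,
      (fderiv ℝ Pt p (0, 1) + fderiv ℝ Ut p (1, 0) = 0) ∧
      (fderiv ℝ Ut p (0, 1) + fderiv ℝ Pt p (1, 0) = 0) := by
    intro p
    have hPd : HasFDerivAt P (fderiv ℝ P p) p := (hP.differentiable (by simp) p).hasFDerivAt
    have hUd : HasFDerivAt U (fderiv ℝ U p) p := (hU.differentiable (by simp) p).hasFDerivAt
    set v' : ℝ × ℝ →L[ℝ] ℝ := (2⁻¹ : ℝ) • (fderiv ℝ P p + fderiv ℝ U p) with hv'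
    set w' : ℝ × ℝ →L[ℝ] ℝ := (2⁻¹ : ℝ) • (fderiv ℝ P p - fderiv ℝ U p) with hw'
    have hv : HasFDerivAt (fun q => (P q + U q) / 2) v' p := by
      have := ((hPd.add hUd).const_smul (2⁻¹ : ℝ))
      rw [show (fun q => (P q + U q) / 2) = (2⁻¹ : ℝ) • (P + U) from by
        funext q; simp; ring]
      exact this
    have hw : HasFDerivAt (fun q => (P q - U q) / 2) w' p := by
      have := ((hPd.sub hUd).const_smul (2⁻¹ : ℝ))
      rw [show (fun q => (P q - U q) / 2) = (2⁻¹ : ℝ) • (P - U) from by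
        funext q; simp; ring]
      exact this
    obtain ⟨cA, hA⟩ : ∃ c : ℝ, HasFDerivAt
        (fun q => Finv (η + F ((P q + U q) / 2))) (c • v') p :=
      ⟨_, aux_hasFDerivAt F Finv hF hF' hFsurj hFinv₂ η _ p v' hv⟩
    obtain ⟨cB, hB⟩ : ∃ c : ℝ, HasFDerivAt
        (fun q => Ginv (θ + G ((P q - U q) / 2))) (c • w') p :=
      ⟨_, aux_hasFDerivAt G Ginv hG hG' hGsurj hGinv₂ θ _ p w' hw⟩
    have hPt : fderiv ℝ Pt p = cA • v' + cB • w' := (hA.add hB).fderiv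
    have hUt : fderiv ℝ Ut p = cA • v' - cB • w' := (hA.sub hB).fderiv
    have e1 := h₁ p
    have e2 := h₂ p
    rw [hPt, hUt]
    simp only [ContinuousLinearMap.add_apply, ContinuousLinearMap.sub_apply,
      ContinuousLinearMap.smul_apply, hv', hw', smul_eq_mul,
      ContinuousLinearMap.coe_smul', Pi.smul_apply]
    refine ⟨?_, ?_⟩
    · linear_combination (cA/2 + cB/2) * e1 + (cA/2 - cB/2) * e2
    · linear_combination (cA/2 - cB/2) * e1 + (cA/2 + cB/2) * e2
  exact ⟨fun p => (key p).1, fun p => (key p).2⟩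
end
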